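/- arXiv:2507.04113 — 5 statements merged into one kernel-verified Lean document; each statement's English description precedes it below -/
import Mathlib

section
/- Let a_1, …, a_d and b_1, …, b_d be an f-dual family. Then for every c ∈ A one has Σ_{i=1}^{d} Res(c·a_i/f)·b_i ≡ c (mod f) in A. -/
/-!
Statement 0.  Setup: `A = F_q[θ]`, `k_∞ = F_q((1/θ))` realized as the field of formal
Laurent series over `F_q` in the variable `X = 1/θ`, so that `θ := X⁻¹`.
`Res x` is the coefficient of `θ⁻¹` (i.e. of `X¹`) in the Laurent expansion of `x`.
An `f`-dual family is a pair of sequences `a_1, …, a_d`, `b_1, …, b_d` in `A`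
(`d = deg f`) with `Res (a_i b_j / f) = δ_{ij}`.
The theorem: for every `c ∈ A`, `Σ_i Res(c·a_i/f)·b_i ≡ c (mod f)`.
-/

noncomputable section

variable (Fq : Type) [Field Fq] [Fintype Fq]

/-- The variable `X = 1/θ` of the Laurent series field `k_∞ = F_q((1/θ))`. -/
def lsX : LaurentSeries Fq := HahnSeries.single 1 1

/-- `θ ∈ k_∞`. -/
def th : LaurentSeries Fq := (lsX Fq)⁻¹

/-- `Res x` : the coefficient of `θ⁻¹` in the Laurent expansion of `x ∈ k_∞`. -/
def Res (x : LaurentSeries Fq) : Fq := x.coeff 1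

open Polynomial

lemma th_eq : th Fq = HahnSeries.single (-1 : ℤ) (1 : Fq) := by
  rw [th, lsX]
  refine (eq_inv_of_mul_eq_one_left ?_).symm
  rw [HahnSeries.single_mul_single, neg_add_cancel, one_mul, HahnSeries.single_zero_one]

lemma th_pow (n : ℕ) : th Fq ^ n = HahnSeries.single (-(n : ℤ)) (1 : Fq) := by
  rw [th_eq, HahnSeries.single_pow, one_pow, smul_neg, nsmul_eq_mul, mul_one]

lemma algebraMap_eq_C (r : Fq) : algebraMap Fq (LaurentSeries Fq) r = HahnSeries.C r := by
  rw [HahnSeries.algebraMap_apply']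
  simp [PowerSeries.algebraMap_apply, HahnSeries.ofPowerSeries_C]

lemma coeff_algebraMap_mul (r : Fq) (y : LaurentSeries Fq) (m : ℤ) :
    (algebraMap Fq (LaurentSeries Fq) r * y).coeff m = r * y.coeff m := by
  rw [algebraMap_eq_C, HahnSeries.C_mul_eq_smul, HahnSeries.coeff_smul, smul_eq_mul]

lemma aeval_coeff (g : Polynomial Fq) (m : ℤ) :
    (aeval (th Fq) g).coeff m = if 0 ≤ -m then g.coeff (-m).toNat else 0 := by
  rw [aeval_def, eval₂_eq_sum, Polynomial.sum]
  refine Eq.trans (map_sum (HahnSeries.coeff.addMonoidHom m) _ _) ?_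
  simp only [HahnSeries.coeff.addMonoidHom, AddMonoidHom.coe_mk, ZeroHom.coe_mk]
  simp only [algebraMap_eq_C, th_pow, HahnSeries.C_apply, HahnSeries.single_mul_single,
    zero_add, mul_one, HahnSeries.coeff_single]
  rcases le_or_gt 0 (-m) with hm | hm
  · set n := (-m).toNat with hn
    have hmn : m = -(n : ℤ) := by omega
    rw [if_pos hm]
    refine Eq.trans (Finset.sum_eq_single n (fun b _ hb => if_neg (by omega))
      (fun hn' => by rw [Polynomial.notMem_support_iff.mp hn', ite_self])) ?_
    exact if_pos hmn
  · rw [if_neg (by omega)]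
    exact Finset.sum_eq_zero fun i _ => if_neg (by omega)

lemma res_aeval (g : Polynomial Fq) : Res Fq (aeval (th Fq) g) = 0 := by
  rw [Res, aeval_coeff, if_neg (by norm_num)]

lemma aevalF_ne {f : Polynomial Fq} (hf : f.Monic) : aeval (th Fq) f ≠ 0 := by
  intro h
  have h2 := aeval_coeff Fq f (-(f.natDegree : ℤ))
  rw [h] at h2
  simp only [HahnSeries.coeff_zero, neg_neg, Int.toNat_natCast, Int.natCast_nonneg,
    if_pos, Polynomial.Monic.coeff_natDegree hf] at h2
  exact one_ne_zero h2.symm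

/-- The pairing map `c ↦ (Res (c aᵢ / f))ᵢ` as a linear map. -/
def Lmap (f : Polynomial Fq) (d : ℕ) (a : Fin d → Polynomial Fq) :
    Polynomial Fq →ₗ[Fq] (Fin d → Fq) where
  toFun c i := Res Fq (aeval (th Fq) c * aeval (th Fq) (a i) / aeval (th Fq) f)
  map_add' c c' := by
    ext i
    simp [Res, add_mul, add_div, HahnSeries.coeff_add]
  map_smul' r c := by
    ext i
    show Res Fq ((aeval (th Fq)) (r • c) * (aeval (th Fq)) (a i) / (aeval (th Fq)) f)
      = r • Res Fq ((aeval (th Fq)) c * (aeval (th Fq)) (a i) / (aeval (th Fq)) f)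
    rw [Polynomial.smul_eq_C_mul, map_mul, Polynomial.aeval_C, mul_assoc, mul_div_assoc,
      Res, Res, coeff_algebraMap_mul, smul_eq_mul]

lemma Lmap_apply (f : Polynomial Fq) (d : ℕ) (a : Fin d → Polynomial Fq) (c : Polynomial Fq)
    (i : Fin d) : Lmap Fq f d a c i
      = Res Fq (aeval (th Fq) c * aeval (th Fq) (a i) / aeval (th Fq) f) := rfl

lemma Lmap_mul_f (f : Polynomial Fq) (hf : f.Monic) (d : ℕ) (a : Fin d → Polynomial Fq)
    (m : Polynomial Fq) (i : Fin d) : Lmap Fq f d a (f * m) i = 0 := by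
  rw [Lmap_apply, map_mul]
  rw [mul_assoc, mul_div_cancel_left₀ _ (aevalF_ne Fq hf), ← map_mul]
  exact res_aeval Fq _


theorem fDual_duality
    (f : Polynomial Fq) (hf : f.Monic) (hdeg : 1 ≤ f.natDegree)
    (a b : Fin f.natDegree → Polynomial Fq)
    (hdual : ∀ i j : Fin f.natDegree,
      Res Fq (Polynomial.aeval (th Fq) (a i) * Polynomial.aeval (th Fq) (b j) /
        Polynomial.aeval (th Fq) f) = if i = j then 1 else 0)
    (c : Polynomial Fq) :
    f ∣ ((∑ i : Fin f.natDegree,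
        Polynomial.C (Res Fq (Polynomial.aeval (th Fq) (c * a i) /
          Polynomial.aeval (th Fq) f)) * b i) - c) := by
  have hne : Nonempty (Fin f.natDegree) := ⟨⟨0, hdeg⟩⟩
  have hLb : ∀ j i, Lmap Fq f f.natDegree a (b j) i = if i = j then 1 else 0 := by
    intro j i
    rw [Lmap_apply, mul_comm]
    exact hdual i j
  have key : ∀ (r : Fin f.natDegree → Fq) (j : Fin f.natDegree),
      Lmap Fq f f.natDegree a (∑ i, Polynomial.C (r i) * b i) j = r j := by
    intro r j
    have h0 : (∑ i, Polynomial.C (r i) * b i) = ∑ i, r i • b i := by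
      simp [Polynomial.smul_eq_C_mul]
    rw [h0, map_sum, Finset.sum_apply]
    simp only [Pi.smul_apply, map_smul]
    calc (∑ i, r i • Lmap Fq f f.natDegree a (b i) j)
        = ∑ i, if j = i then r i else 0 := by
          refine Finset.sum_congr rfl fun i _ => ?_
          rw [hLb i j]
          by_cases h : j = i
          · rw [if_pos h, if_pos h, smul_eq_mul, mul_one]
          · rw [if_neg h, if_neg h, smul_eq_mul, mul_zero]
      _ = r j := by rw [Finset.sum_ite_eq]; simp
  have hsm : ∀ (r : Fq) (p : Polynomial Fq),
      r • AdjoinRoot.mk f p = AdjoinRoot.mk f (Polynomial.C r * p) := by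
    intro r p
    rw [Algebra.smul_def, AdjoinRoot.algebraMap_eq, map_mul]
    rfl
  have hmkb_li : LinearIndependent Fq fun j => AdjoinRoot.mk f (b j) := by
    rw [Fintype.linearIndependent_iff]
    intro g hg j
    have h1 : AdjoinRoot.mk f (∑ i, Polynomial.C (g i) * b i) = 0 := by
      rw [map_sum]
      calc (∑ i, AdjoinRoot.mk f (Polynomial.C (g i) * b i))
          = ∑ i, g i • AdjoinRoot.mk f (b i) := by
            refine Finset.sum_congr rfl fun i _ => (hsm (g i) (b i)).symm
        _ = 0 := hg
    obtain ⟨m, hm⟩ := AdjoinRoot.mk_eq_zero.mp h1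
    have h2 := key g j
    rw [hm] at h2
    rw [Lmap_mul_f Fq f hf f.natDegree a m j] at h2
    exact h2.symm
  have hfd : FiniteDimensional Fq (AdjoinRoot f) :=
    Module.Finite.of_basis (AdjoinRoot.powerBasisAux' hf)
  have hcard : Fintype.card (Fin f.natDegree) = Module.finrank Fq (AdjoinRoot f) := by
    rw [Module.finrank_eq_card_basis (AdjoinRoot.powerBasisAux' hf), Fintype.card_fin]
  set B := basisOfLinearIndependentOfCardEqFinrank hmkb_li hcard with hB
  have hBc : ∀ i, B i = AdjoinRoot.mk f (b i) := fun i =>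
    congrFun (coe_basisOfLinearIndependentOfCardEqFinrank hmkb_li hcard) i
  set γ : Fin f.natDegree → Fq := fun i => B.repr (AdjoinRoot.mk f c) i with hγ
  have hrepr : AdjoinRoot.mk f (∑ i, Polynomial.C (γ i) * b i) = AdjoinRoot.mk f c := by
    rw [map_sum]
    calc (∑ i, AdjoinRoot.mk f (Polynomial.C (γ i) * b i))
        = ∑ i, γ i • B i := by
          refine Finset.sum_congr rfl fun i _ => ?_
          rw [hBc i]
          exact (hsm (γ i) (b i)).symm
      _ = AdjoinRoot.mk f c := B.sum_repr _
  obtain ⟨m', hm'⟩ := AdjoinRoot.mk_eq_zero.mp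
    (show AdjoinRoot.mk f ((∑ i, Polynomial.C (γ i) * b i) - c) = 0 by
      rw [map_sub, hrepr, sub_self])
  have hceq : c = (∑ i, Polynomial.C (γ i) * b i) + f * (-m') := by
    rw [mul_neg, ← hm']; ring
  have hc : ∀ j, Lmap Fq f f.natDegree a c j = γ j := by
    intro j
    rw [hceq, map_add, Pi.add_apply, key γ j, Lmap_mul_f Fq f hf f.natDegree a (-m') j, add_zero]
  have hs : (∑ i, Polynomial.C (Res Fq (Polynomial.aeval (th Fq) (c * a i) /
        Polynomial.aeval (th Fq) f)) * b i) = ∑ i, Polynomial.C (γ i) * b i := by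
    refine Finset.sum_congr rfl fun i _ => ?_
    have h3 : Res Fq (Polynomial.aeval (th Fq) (c * a i) / Polynomial.aeval (th Fq) f) = γ i := by
      rw [show (Polynomial.aeval (th Fq)) (c * a i)
          = (Polynomial.aeval (th Fq)) c * (Polynomial.aeval (th Fq)) (a i) from map_mul _ _ _]
      exact hc i
    rw [h3]
  rw [hs, hm']
  exact dvd_mul_right f m'

end
end

section
/- For every N ≥ 0 the following two identities hold in the polynomial ring k[x]: Ψ_N(x) = D_N^{-1} · ∏_{a} (x − a), the product taken over all a ∈ A with deg a < N (including a = 0, so over all q^N polynomials of degree less than N); and Ψ_N(x) − 1 = D_N^{-1} · ∏_{a} (x − a), the product taken over all monic a ∈ A of degree exactly N. -/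
/-!
Statement 3.  `k = F_q(θ)` is the rational function field (with `θ = RatFunc.X`),
`D_i`, `L_i` the Carlitz factorials, and `Ψ_N(x) = Σ_{j=0}^{N} x^{q^j}/(D_j·L_{N−j}^{q^j}) ∈ k[x]`.
The theorem: `Ψ_N(x) = D_N⁻¹·∏_{deg a < N}(x − a)` (the product over all `q^N`
polynomials of degree `< N`, parametrized by their coefficient tuples), and
`Ψ_N(x) − 1 = D_N⁻¹·∏_{a monic, deg a = N}(x − a)`.
-/

noncomputable section

variable (Fq : Type) [Field Fq] [Fintype Fq]

local notation "q" => Fintype.card Fq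

/-- `k = F_q(θ)`, with `θ` the generator `X` of the rational function field. -/
abbrev kk := RatFunc Fq

/-- `θ ∈ k`. -/
def thk : RatFunc Fq := RatFunc.X

/-- `D_i = (θ^{q^i} − θ)(θ^{q^i} − θ^q)⋯(θ^{q^i} − θ^{q^{i−1}})`, with `D_0 = 1`. -/
def Dk (i : ℕ) : RatFunc Fq :=
  ∏ m ∈ Finset.range i, (thk Fq ^ (q ^ i) - thk Fq ^ (q ^ m))

/-- `L_i = (θ − θ^q)⋯(θ − θ^{q^i})`, with `L_0 = 1`. -/
def Lk (i : ℕ) : RatFunc Fq :=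
  ∏ m ∈ Finset.range i, (thk Fq - thk Fq ^ (q ^ (m + 1)))

/-- `Ψ_N(x) = Σ_{j=0}^{N} x^{q^j}/(D_j·L_{N−j}^{q^j}) ∈ k[x]`. -/
def Psi (N : ℕ) : Polynomial (RatFunc Fq) :=
  ∑ j ∈ Finset.range (N + 1),
    Polynomial.C ((Dk Fq j * (Lk Fq (N - j)) ^ (q ^ j))⁻¹) * Polynomial.X ^ (q ^ j)

/-- The polynomial `Σ_i c_i θ^i ∈ A = F_q[θ]` with coefficient tuple `c : Fin N → F_q`;
these range bijectively over the polynomials of degree `< N`. -/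
def polyOf {N : ℕ} (c : Fin N → Fq) : Polynomial Fq :=
  ∑ i : Fin N, Polynomial.C (c i) * Polynomial.X ^ (i : ℕ)

-- ===================== auxiliary development =====================
open Polynomial Finset

local notation "θ" => thk Fq
local notation "σ" => algebraMap (Polynomial Fq) (RatFunc Fq)

lemma hq2 : 1 < q := Fintype.one_lt_card

lemma char_pack : ∃ p n : ℕ, Nat.Prime p ∧ q = p ^ n ∧
    CharP (RatFunc Fq) p ∧ CharP (Polynomial (RatFunc Fq)) p := by
  obtain ⟨n, hp, hc⟩ := FiniteField.card Fq (ringChar Fq)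
  haveI : CharP (Polynomial Fq) (ringChar Fq) := inferInstance
  have h1 : CharP (RatFunc Fq) (ringChar Fq) :=
    charP_of_injective_ringHom (IsFractionRing.injective (Polynomial Fq) (RatFunc Fq)) _
  haveI := h1
  have h2 : CharP (Polynomial (RatFunc Fq)) (ringChar Fq) := inferInstance
  exact ⟨ringChar Fq, n, hp, hc, h1, h2⟩
lemma addq (x y : RatFunc Fq) (j : ℕ) : (x + y) ^ q ^ j = x ^ q ^ j + y ^ q ^ j := by
  obtain ⟨p, n, hp, hc, h1, _⟩ := char_pack Fq
  haveI := Fact.mk hp; haveI := h1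
  rw [hc, ← pow_mul, add_pow_char_pow]

lemma subq (x y : RatFunc Fq) (j : ℕ) : (x - y) ^ q ^ j = x ^ q ^ j - y ^ q ^ j := by
  have := addq Fq (x - y) y j
  rw [sub_add_cancel] at this
  rw [eq_sub_iff_add_eq]
  exact this.symm

lemma sumqP {ι : Type} (s : Finset ι) (f : ι → Polynomial (RatFunc Fq)) (j : ℕ) :
    (∑ i ∈ s, f i) ^ q ^ j = ∑ i ∈ s, f i ^ q ^ j := by
  obtain ⟨p, n, hp, hc, _, h2⟩ := char_pack Fq
  haveI := Fact.mk hp; haveI := h2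
  rw [hc, ← pow_mul, sum_pow_char_pow]

lemma subqP (x y : Polynomial (RatFunc Fq)) (j : ℕ) : (x - y) ^ q ^ j = x ^ q ^ j - y ^ q ^ j := by
  obtain ⟨p, n, hp, hc, _, h2⟩ := char_pack Fq
  haveI := Fact.mk hp; haveI := h2
  rw [hc, ← pow_mul, sub_pow_char_pow]

/-- `α^{q^j} = α` for scalars `α ∈ F_q` inside `RatFunc Fq`. -/
lemma scalar_pow (α : Fq) (j : ℕ) : α ^ q ^ j = α := by
  induction j with
  | zero => simp
  | succ j ih => rw [pow_succ, pow_mul, ih, FiniteField.pow_card]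

lemma scalarq (α : Fq) (j : ℕ) : (σ (Polynomial.C α)) ^ q ^ j = σ (Polynomial.C α) := by
  rw [← map_pow, ← map_pow, scalar_pow]

lemma thk_pow_ne (a b : ℕ) (h : a ≠ b) : θ ^ a ≠ θ ^ b := by
  have hX : (θ : RatFunc Fq) ^ a = σ (Polynomial.X ^ a) := by
    rw [map_pow, RatFunc.algebraMap_X, thk]
  have hX' : (θ : RatFunc Fq) ^ b = σ (Polynomial.X ^ b) := by
    rw [map_pow, RatFunc.algebraMap_X, thk]
  rw [hX, hX']
  intro hcon
  have := IsFractionRing.injective (Polynomial Fq) (RatFunc Fq) hcon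
  have ha : (Polynomial.X ^ a : Polynomial Fq).natDegree = a := by simp
  have hb : (Polynomial.X ^ b : Polynomial Fq).natDegree = b := by simp
  rw [this] at ha
  omega

lemma qpow_ne {a b : ℕ} (h : a ≠ b) : q ^ a ≠ q ^ b := by
  intro hcon
  exact h (Nat.pow_right_injective (hq2 Fq) hcon)

lemma thk_qpow_sub_ne {a b : ℕ} (h : a ≠ b) : θ ^ q ^ a - θ ^ q ^ b ≠ 0 := by
  rw [sub_ne_zero]
  exact thk_pow_ne Fq _ _ (qpow_ne Fq h)

lemma Dk_ne_zero (i : ℕ) : Dk Fq i ≠ 0 := by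
  rw [Dk]
  apply Finset.prod_ne_zero_iff.2
  intro m hm
  exact thk_qpow_sub_ne Fq (by simp at hm; omega)

lemma Lk_ne_zero (i : ℕ) : Lk Fq i ≠ 0 := by
  rw [Lk]
  apply Finset.prod_ne_zero_iff.2
  intro m hm
  have := thk_qpow_sub_ne Fq (a := 0) (b := m + 1) (by omega)
  simpa using this

lemma Dk_succ (N : ℕ) : Dk Fq (N + 1) = Dk Fq N ^ q * (θ ^ q ^ (N + 1) - θ) := by
  have h1 : Dk Fq N ^ q = ∏ m ∈ Finset.range N, (θ ^ q ^ (N + 1) - θ ^ q ^ (m + 1)) := by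
    rw [Dk, ← Finset.prod_pow]
    apply Finset.prod_congr rfl
    intro m hm
    have : (θ ^ q ^ N - θ ^ q ^ m) ^ q ^ 1 = (θ ^ q ^ N) ^ q ^ 1 - (θ ^ q ^ m) ^ q ^ 1 :=
      subq Fq _ _ 1
    simp only [pow_one] at this
    rw [this, ← pow_mul, ← pow_mul, ← pow_succ, ← pow_succ]
  rw [Dk, Finset.prod_range_succ', h1]
  simp

lemma Lk_succ (N : ℕ) : Lk Fq (N + 1) = Lk Fq N * (θ - θ ^ q ^ (N + 1)) := by
  rw [Lk, Lk, Finset.prod_range_succ]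
lemma sumq {ι : Type} (s : Finset ι) (f : ι → RatFunc Fq) :
    (∑ i ∈ s, f i) ^ q = ∑ i ∈ s, f i ^ q := by
  obtain ⟨p, n, hp, hc, h1, _⟩ := char_pack Fq
  haveI := Fact.mk hp; haveI := h1
  rw [hc, sum_pow_char_pow]

lemma pow_qpow_succ (A k : ℕ) : ((θ ^ q ^ A) ^ k) ^ q = (θ ^ q ^ (A + 1)) ^ k := by
  rw [← pow_mul, ← pow_mul, ← pow_mul]
  congr 1
  rw [pow_succ]
  ring

/-- Complete homogeneous symmetric "polynomial" of degree `m` in the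
variables `θ^{q^s}, θ^{q^{s+1}}, …, θ^{q^{s+N}}`. -/
def hsym (s : ℕ) : ℕ → ℕ → RatFunc Fq
  | m, 0 => (θ ^ q ^ s) ^ m
  | m, N + 1 => ∑ k ∈ Finset.range (m + 1), (θ ^ q ^ (s + N + 1)) ^ k * hsym s (m - k) N

lemma hsym_zero (s : ℕ) : ∀ N, hsym Fq s 0 N = 1 := by
  intro N
  induction N with
  | zero => simp [hsym]
  | succ N ih => simp [hsym, ih]

lemma hsym_frob (s m N : ℕ) : (hsym Fq s m N) ^ q = hsym Fq (s + 1) m N := by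
  induction N generalizing m with
  | zero => exact pow_qpow_succ Fq s m
  | succ N ih =>
    show (∑ k ∈ Finset.range (m + 1), (θ ^ q ^ (s + N + 1)) ^ k * hsym Fq s (m - k) N) ^ q
        = ∑ k ∈ Finset.range (m + 1), (θ ^ q ^ (s + 1 + N + 1)) ^ k * hsym Fq (s + 1) (m - k) N
    rw [sumq Fq]
    apply Finset.sum_congr rfl
    intro k _
    rw [mul_pow, ih, pow_qpow_succ]
    have : s + N + 1 + 1 = s + 1 + N + 1 := by omega
    rw [this]

lemma hsym_back (s m N : ℕ) :
    hsym Fq s (m + 1) (N + 1)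
      = hsym Fq s (m + 1) N + θ ^ q ^ (s + N + 1) * hsym Fq s m (N + 1) := by
  show (∑ k ∈ Finset.range (m + 2), (θ ^ q ^ (s + N + 1)) ^ k * hsym Fq s (m + 1 - k) N)
    = hsym Fq s (m + 1) N + θ ^ q ^ (s + N + 1) *
        ∑ k ∈ Finset.range (m + 1), (θ ^ q ^ (s + N + 1)) ^ k * hsym Fq s (m - k) N
  rw [Finset.sum_range_succ']
  have : ∀ k ∈ Finset.range (m + 1),
      (θ ^ q ^ (s + N + 1)) ^ (k + 1) * hsym Fq s (m + 1 - (k + 1)) N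
        = θ ^ q ^ (s + N + 1) * ((θ ^ q ^ (s + N + 1)) ^ k * hsym Fq s (m - k) N) := by
    intro k _
    rw [Nat.succ_sub_succ, pow_succ']
    ring
  rw [Finset.sum_congr rfl this, ← Finset.mul_sum, pow_zero, one_mul, Nat.sub_zero, add_comm]

lemma hsym_front (s : ℕ) : ∀ N m, hsym Fq s (m + 1) (N + 1)
    = hsym Fq (s + 1) (m + 1) N + θ ^ q ^ s * hsym Fq s m (N + 1) := by
  intro N
  induction N with
  | zero =>
    intro m
    show (∑ k ∈ Finset.range (m + 2), (θ ^ q ^ (s + 0 + 1)) ^ k * (θ ^ q ^ s) ^ (m + 1 - k))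
      = (θ ^ q ^ (s + 1)) ^ (m + 1) + θ ^ q ^ s *
        ∑ k ∈ Finset.range (m + 1), (θ ^ q ^ (s + 0 + 1)) ^ k * (θ ^ q ^ s) ^ (m - k)
    rw [Finset.sum_range_succ]
    have h0 : m + 1 - (m + 1) = 0 := by omega
    rw [h0, pow_zero, mul_one]
    have step : ∀ k ∈ Finset.range (m + 1),
        (θ ^ q ^ (s + 0 + 1)) ^ k * (θ ^ q ^ s) ^ (m + 1 - k)
          = θ ^ q ^ s * ((θ ^ q ^ (s + 0 + 1)) ^ k * (θ ^ q ^ s) ^ (m - k)) := by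
      intro k hk
      simp only [Finset.mem_range] at hk
      have h1 : m + 1 - k = (m - k) + 1 := by omega
      rw [h1, pow_succ]
      ring
    rw [Finset.sum_congr rfl step, ← Finset.mul_sum]
    have h3 : s + 0 + 1 = s + 1 := by omega
    rw [h3, add_comm]
  | succ N ih =>
    intro m
    have hidx : s + 1 + N + 1 = s + (N + 1) + 1 := by omega
    show (∑ k ∈ Finset.range (m + 2), (θ ^ q ^ (s + (N + 1) + 1)) ^ k * hsym Fq s (m + 1 - k) (N + 1))
      = (∑ k ∈ Finset.range (m + 2), (θ ^ q ^ (s + 1 + N + 1)) ^ k * hsym Fq (s + 1) (m + 1 - k) N)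
        + θ ^ q ^ s * hsym Fq s m (N + 2)
    rw [hidx]
    have key : ∀ k ∈ Finset.range (m + 2),
        (θ ^ q ^ (s + (N + 1) + 1)) ^ k * hsym Fq s (m + 1 - k) (N + 1)
          = (θ ^ q ^ (s + (N + 1) + 1)) ^ k * hsym Fq (s + 1) (m + 1 - k) N
            + (if k ≤ m then θ ^ q ^ s * ((θ ^ q ^ (s + (N + 1) + 1)) ^ k * hsym Fq s (m - k) (N + 1)) else 0) := by
      intro k hk
      simp only [Finset.mem_range] at hk
      by_cases hkm : k ≤ m
      · have h1 : m + 1 - k = (m - k) + 1 := by omega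
        rw [if_pos hkm, h1, ih (m - k)]
        ring
      · have hk1 : k = m + 1 := by omega
        rw [if_neg hkm, hk1]
        have h0 : m + 1 - (m + 1) = 0 := by omega
        rw [h0, hsym_zero, hsym_zero, add_zero]
    rw [Finset.sum_congr rfl key, Finset.sum_add_distrib]
    congr 1
    rw [Finset.sum_ite, Finset.sum_const_zero, add_zero]
    have hfilter : Finset.filter (fun k => k ≤ m) (Finset.range (m + 2)) = Finset.range (m + 1) := by
      ext k
      simp only [Finset.mem_filter, Finset.mem_range]
      omega
    rw [hfilter, ← Finset.mul_sum]
    rfl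

lemma hsym_I (s m N : ℕ) :
    hsym Fq (s + 1) (m + 1) N - hsym Fq s (m + 1) N
      = (θ ^ q ^ (s + N + 1) - θ ^ q ^ s) * hsym Fq s m (N + 1) := by
  have h1 := hsym_back Fq s m N
  have h2 := hsym_front Fq s N m
  linear_combination h1 - h2
lemma Dk_zero : Dk Fq 0 = 1 := Finset.prod_range_zero _
lemma Lk_zero : Lk Fq 0 = 1 := Finset.prod_range_zero _

lemma sumqP1 {ι : Type} (s : Finset ι) (f : ι → Polynomial (RatFunc Fq)) :
    (∑ i ∈ s, f i) ^ q = ∑ i ∈ s, f i ^ q := by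
  obtain ⟨p, n, hp, hc, _, h2⟩ := char_pack Fq
  haveI := Fact.mk hp; haveI := h2
  rw [hc, sum_pow_char_pow]

lemma theta_E_ne (j : ℕ) : θ ^ q ^ (j + 1) - θ ≠ 0 := by
  have := thk_qpow_sub_ne Fq (a := j + 1) (b := 0) (by omega)
  simpa using this

lemma coeff_c1 (N : ℕ) :
    (θ ^ q ^ (N + 1) - θ) * (Dk Fq 0 * Lk Fq (N + 1) ^ q ^ 0)⁻¹
      = -(Dk Fq 0 * Lk Fq N ^ q ^ 0)⁻¹ := by
  rw [Dk_zero, pow_zero, pow_one, pow_one, one_mul, one_mul, Lk_succ]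
  have h1 := Lk_ne_zero Fq N
  have h2 := theta_E_ne Fq N
  have h3 : θ - θ ^ q ^ (N + 1) ≠ 0 := by
    intro h
    apply h2
    linear_combination -h
  field_simp
  ring

lemma coeff_c3 (N : ℕ) :
    (θ ^ q ^ (N + 1) - θ) * (Dk Fq (N + 1) * Lk Fq 0 ^ q ^ (N + 1))⁻¹
      = ((Dk Fq N * Lk Fq 0 ^ q ^ N)⁻¹) ^ q := by
  rw [Lk_zero, one_pow, one_pow, mul_one, mul_one, Dk_succ, inv_pow]
  have h1 := Dk_ne_zero Fq N
  have h2 := theta_E_ne Fq N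
  have h4 : Dk Fq N ^ q ≠ 0 := pow_ne_zero _ h1
  field_simp

lemma coeff_c2 (N j : ℕ) (hj : j < N) :
    (θ ^ q ^ (N + 1) - θ) * (Dk Fq (j + 1) * Lk Fq (N + 1 - (j + 1)) ^ q ^ (j + 1))⁻¹
      = ((Dk Fq j * Lk Fq (N - j) ^ q ^ j)⁻¹) ^ q
        - (Dk Fq (j + 1) * Lk Fq (N - (j + 1)) ^ q ^ (j + 1))⁻¹ := by
  have e1 : N + 1 - (j + 1) = (N - (j + 1)) + 1 := by omega
  have e2 : N - j = (N - (j + 1)) + 1 := by omega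
  set M := N - (j + 1) with hM
  rw [e1, e2, Dk_succ, Lk_succ]
  have hsub : (θ - θ ^ q ^ (M + 1)) ^ q ^ (j + 1)
      = θ ^ q ^ (j + 1) - θ ^ q ^ (N + 1) := by
    rw [subq]
    congr 1
    rw [← pow_mul, ← pow_add]
    have : M + 1 + (j + 1) = N + 1 := by omega
    rw [this]
  have hpowj : ∀ x : RatFunc Fq, (x ^ q ^ j) ^ q = x ^ q ^ (j + 1) := fun x => by
    rw [← pow_mul, ← pow_succ]
  rw [inv_pow, mul_pow (Dk Fq j), hpowj, mul_pow (Lk Fq M), hsub]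
  -- now pure field identity
  have ha : Dk Fq j ≠ 0 := Dk_ne_zero Fq j
  have haq : Dk Fq j ^ q ≠ 0 := pow_ne_zero _ ha
  have hl : Lk Fq M ^ q ^ (j + 1) ≠ 0 := pow_ne_zero _ (Lk_ne_zero Fq M)
  have hE : θ ^ q ^ (j + 1) - θ ≠ 0 := theta_E_ne Fq j
  have hF : θ ^ q ^ (j + 1) - θ ^ q ^ (N + 1) ≠ 0 := thk_qpow_sub_ne Fq (by omega)
  set u := Dk Fq j ^ q
  set v := Lk Fq M ^ q ^ (j + 1)
  set E := θ ^ q ^ (j + 1) - θ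
  set F := θ ^ q ^ (j + 1) - θ ^ q ^ (N + 1)
  have hT : θ ^ q ^ (N + 1) - θ = E - F := by ring
  rw [hT]
  field_simp

lemma psi_rec (N : ℕ) :
    Polynomial.C (θ ^ q ^ (N + 1) - θ) * Psi Fq (N + 1) = (Psi Fq N) ^ q - Psi Fq N := by
  have hPq : (Psi Fq N) ^ q = ∑ j ∈ Finset.range (N + 1),
      Polynomial.C (((Dk Fq j * Lk Fq (N - j) ^ q ^ j)⁻¹) ^ q) * Polynomial.X ^ q ^ (j + 1) := by
    rw [Psi, sumqP1]
    apply Finset.sum_congr rfl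
    intro j _
    rw [mul_pow, ← map_pow, ← pow_mul, ← pow_succ]
  have hL : Polynomial.C (θ ^ q ^ (N + 1) - θ) * Psi Fq (N + 1)
      = ∑ j ∈ Finset.range (N + 2), Polynomial.C ((θ ^ q ^ (N + 1) - θ)
          * (Dk Fq j * Lk Fq (N + 1 - j) ^ q ^ j)⁻¹) * Polynomial.X ^ q ^ j := by
    rw [Psi, Finset.mul_sum]
    apply Finset.sum_congr rfl
    intro j _
    rw [map_mul, mul_assoc]
  rw [hPq, hL, Psi]
  rw [show (∑ j ∈ Finset.range (N + 2), Polynomial.C ((θ ^ q ^ (N + 1) - θ)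
        * (Dk Fq j * Lk Fq (N + 1 - j) ^ q ^ j)⁻¹) * Polynomial.X ^ q ^ j)
      = (∑ j ∈ Finset.range (N + 1), Polynomial.C ((θ ^ q ^ (N + 1) - θ)
        * (Dk Fq (j + 1) * Lk Fq (N + 1 - (j + 1)) ^ q ^ (j + 1))⁻¹) * Polynomial.X ^ q ^ (j + 1))
        + Polynomial.C ((θ ^ q ^ (N + 1) - θ)
        * (Dk Fq 0 * Lk Fq (N + 1 - 0) ^ q ^ 0)⁻¹) * Polynomial.X ^ q ^ 0
    from Finset.sum_range_succ' _ _]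
  rw [show (∑ j ∈ Finset.range (N + 1),
        Polynomial.C ((Dk Fq j * Lk Fq (N - j) ^ q ^ j)⁻¹) * Polynomial.X ^ q ^ j)
      = (∑ j ∈ Finset.range N,
        Polynomial.C ((Dk Fq (j + 1) * Lk Fq (N - (j + 1)) ^ q ^ (j + 1))⁻¹) * Polynomial.X ^ q ^ (j + 1))
        + Polynomial.C ((Dk Fq 0 * Lk Fq (N - 0) ^ q ^ 0)⁻¹) * Polynomial.X ^ q ^ 0
    from Finset.sum_range_succ' _ _]
  rw [show (∑ j ∈ Finset.range (N + 1),
        Polynomial.C (((Dk Fq j * Lk Fq (N - j) ^ q ^ j)⁻¹) ^ q) * Polynomial.X ^ q ^ (j + 1))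
      = (∑ j ∈ Finset.range N,
        Polynomial.C (((Dk Fq j * Lk Fq (N - j) ^ q ^ j)⁻¹) ^ q) * Polynomial.X ^ q ^ (j + 1))
        + Polynomial.C (((Dk Fq N * Lk Fq (N - N) ^ q ^ N)⁻¹) ^ q) * Polynomial.X ^ q ^ (N + 1)
    from Finset.sum_range_succ _ _]
  rw [show (∑ j ∈ Finset.range (N + 1), Polynomial.C ((θ ^ q ^ (N + 1) - θ)
        * (Dk Fq (j + 1) * Lk Fq (N + 1 - (j + 1)) ^ q ^ (j + 1))⁻¹) * Polynomial.X ^ q ^ (j + 1))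
      = (∑ j ∈ Finset.range N, Polynomial.C ((θ ^ q ^ (N + 1) - θ)
        * (Dk Fq (j + 1) * Lk Fq (N + 1 - (j + 1)) ^ q ^ (j + 1))⁻¹) * Polynomial.X ^ q ^ (j + 1))
        + Polynomial.C ((θ ^ q ^ (N + 1) - θ)
        * (Dk Fq (N + 1) * Lk Fq (N + 1 - (N + 1)) ^ q ^ (N + 1))⁻¹) * Polynomial.X ^ q ^ (N + 1)
    from Finset.sum_range_succ _ _]
  have hmid : (∑ j ∈ Finset.range N, Polynomial.C ((θ ^ q ^ (N + 1) - θ)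
        * (Dk Fq (j + 1) * Lk Fq (N + 1 - (j + 1)) ^ q ^ (j + 1))⁻¹) * Polynomial.X ^ q ^ (j + 1))
      = (∑ j ∈ Finset.range N,
          Polynomial.C (((Dk Fq j * Lk Fq (N - j) ^ q ^ j)⁻¹) ^ q) * Polynomial.X ^ q ^ (j + 1))
        - (∑ j ∈ Finset.range N,
          Polynomial.C ((Dk Fq (j + 1) * Lk Fq (N - (j + 1)) ^ q ^ (j + 1))⁻¹) * Polynomial.X ^ q ^ (j + 1)) := by
    rw [← Finset.sum_sub_distrib]
    apply Finset.sum_congr rfl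
    intro j hj
    simp only [Finset.mem_range] at hj
    rw [coeff_c2 Fq N j hj, map_sub, sub_mul]
  have htop : Polynomial.C ((θ ^ q ^ (N + 1) - θ)
        * (Dk Fq (N + 1) * Lk Fq (N + 1 - (N + 1)) ^ q ^ (N + 1))⁻¹) * Polynomial.X ^ q ^ (N + 1)
      = Polynomial.C (((Dk Fq N * Lk Fq (N - N) ^ q ^ N)⁻¹) ^ q) * Polynomial.X ^ q ^ (N + 1) := by
    rw [Nat.sub_self, Nat.sub_self, coeff_c3]
  have hzero : Polynomial.C ((θ ^ q ^ (N + 1) - θ)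
        * (Dk Fq 0 * Lk Fq (N + 1 - 0) ^ q ^ 0)⁻¹) * Polynomial.X ^ q ^ 0
      = -(Polynomial.C ((Dk Fq 0 * Lk Fq (N - 0) ^ q ^ 0)⁻¹) * Polynomial.X ^ q ^ 0) := by
    rw [Nat.sub_zero, Nat.sub_zero, coeff_c1, map_neg, neg_mul]
  rw [hmid, htop, hzero]
  ring
lemma prod_X_sub_C_Fq :
    ∏ a : Fq, (Polynomial.X - Polynomial.C a) = Polynomial.X ^ q - Polynomial.X := by
  have hmonic : (Polynomial.X ^ q - Polynomial.X : Polynomial Fq).Monic := by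
    apply Polynomial.monic_X_pow_sub
    rw [Polynomial.degree_X]
    exact_mod_cast hq2 Fq
  have hroots := FiniteField.roots_X_pow_card_sub_X Fq
  have hcard : Multiset.card (Polynomial.roots (Polynomial.X ^ q - Polynomial.X : Polynomial Fq))
      = (Polynomial.X ^ q - Polynomial.X : Polynomial Fq).natDegree := by
    rw [hroots, FiniteField.X_pow_card_sub_X_natDegree_eq Fq (hq2 Fq)]
    exact Finset.card_univ
  have hprod := Polynomial.prod_multiset_X_sub_C_of_monic_of_roots_card_eq hmonic hcard
  rw [hroots] at hprod
  rw [← hprod]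
  rfl

lemma prod_linear (P : Polynomial (RatFunc Fq)) (t : RatFunc Fq) (ht : t ≠ 0) :
    ∏ a : Fq, (P - Polynomial.C (σ (Polynomial.C a) * t))
      = P ^ q - Polynomial.C (t ^ (q - 1)) * P := by
  have key : ∀ Q : Polynomial (RatFunc Fq),
      ∏ a : Fq, (Q - Polynomial.C (σ (Polynomial.C a))) = Q ^ q - Q := by
    intro Q
    set τ : Fq →+* RatFunc Fq := (algebraMap (Polynomial Fq) (RatFunc Fq)).comp Polynomial.C with hτ
    set ψ : Polynomial Fq →+* Polynomial (RatFunc Fq) :=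
      Polynomial.eval₂RingHom (Polynomial.C.comp τ) Q with hψ
    have h2 := congrArg ψ (prod_X_sub_C_Fq Fq)
    rw [map_prod, map_sub, map_pow] at h2
    simp only [hψ, Polynomial.coe_eval₂RingHom, Polynomial.eval₂_X, Polynomial.eval₂_C,
      Polynomial.eval₂_sub, RingHom.coe_comp, Function.comp_apply, hτ] at h2
    exact h2
  have hfactor : ∀ a : Fq, P - Polynomial.C (σ (Polynomial.C a) * t)
      = Polynomial.C t * (Polynomial.C t⁻¹ * P - Polynomial.C (σ (Polynomial.C a))) := by
    intro a
    rw [mul_sub, ← mul_assoc, ← Polynomial.C_mul, mul_inv_cancel₀ ht, Polynomial.C_1, one_mul,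
      ← Polynomial.C_mul, mul_comm t]
  rw [Finset.prod_congr rfl (fun a _ => hfactor a), Finset.prod_mul_distrib,
    Finset.prod_const, Finset.card_univ, key]
  rw [mul_sub, mul_pow, ← mul_assoc, ← map_pow, ← map_pow, ← map_mul]
  have e1 : t ^ q * t⁻¹ ^ q = 1 := by rw [← mul_pow, mul_inv_cancel₀ ht, one_pow]
  have e2 : t ^ q * t⁻¹ = t ^ (q - 1) := by
    rw [pow_sub₀ t ht (le_of_lt (hq2 Fq)), pow_one]
  rw [e1, Polynomial.C_1, one_mul, ← mul_assoc, ← Polynomial.C_mul, e2]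

lemma polyOf_snoc (N : ℕ) (c : Fin N → Fq) (a : Fq) :
    polyOf Fq (Fin.snoc c a) = polyOf Fq c + Polynomial.C a * Polynomial.X ^ N := by
  rw [polyOf, polyOf, Fin.sum_univ_castSucc]
  simp
lemma sigma_X : σ Polynomial.X = θ := RatFunc.algebraMap_X

def eA (N : ℕ) : Polynomial (RatFunc Fq) :=
  ∏ c : Fin N → Fq,
    (Polynomial.X - Polynomial.C (algebraMap (Polynomial Fq) (RatFunc Fq) (polyOf Fq c)))

lemma psi_eval (N : ℕ) (s : RatFunc Fq) :
    (Psi Fq N).eval s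
      = ∑ j ∈ Finset.range (N + 1), (Dk Fq j * Lk Fq (N - j) ^ q ^ j)⁻¹ * s ^ q ^ j := by
  rw [Psi, Polynomial.eval_finset_sum]
  simp

lemma psi_comp_sub (N : ℕ) (s : RatFunc Fq) :
    (Psi Fq N).comp (Polynomial.X - Polynomial.C s)
      = Psi Fq N - Polynomial.C ((Psi Fq N).eval s) := by
  have h2 : ∀ j : ℕ, (Polynomial.X - Polynomial.C s : Polynomial (RatFunc Fq)) ^ q ^ j
      = Polynomial.X ^ q ^ j - Polynomial.C (s ^ q ^ j) := by
    intro j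
    rw [subqP, ← map_pow]
  have h1 : (Psi Fq N).comp (Polynomial.X - Polynomial.C s)
      = ∑ j ∈ Finset.range (N + 1),
          (Polynomial.C ((Dk Fq j * Lk Fq (N - j) ^ q ^ j)⁻¹) * Polynomial.X ^ q ^ j
            - Polynomial.C ((Dk Fq j * Lk Fq (N - j) ^ q ^ j)⁻¹ * s ^ q ^ j)) := by
    simp only [Psi, Polynomial.comp, Polynomial.eval₂_finset_sum, Polynomial.eval₂_mul,
      Polynomial.eval₂_C, Polynomial.eval₂_X_pow]
    apply Finset.sum_congr rfl
    intro j _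
    rw [h2 j, mul_sub, ← map_mul]
  rw [h1, Finset.sum_sub_distrib, ← Psi, psi_eval, map_sum]

lemma psi_eval_smul (N : ℕ) (α : Fq) (s : RatFunc Fq) :
    (Psi Fq N).eval (σ (Polynomial.C α) * s) = σ (Polynomial.C α) * (Psi Fq N).eval s := by
  rw [psi_eval, psi_eval, Finset.mul_sum]
  apply Finset.sum_congr rfl
  intro j _
  rw [mul_pow, scalarq]
  ring

lemma psi_eval_h (N : ℕ) : ∀ m : ℕ, (Psi Fq N).eval (θ ^ (N + m)) = hsym Fq 0 m N := by
  induction N with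
  | zero =>
    intro m
    rw [psi_eval]
    simp only [Finset.sum_range_one, Nat.sub_self, Dk_zero, Lk_zero, pow_zero, pow_one, one_pow,
      mul_one, inv_one, one_mul, Nat.zero_add]
    show θ ^ m = (θ ^ q ^ 0) ^ m
    rw [pow_zero, pow_one]
  | succ N ih =>
    intro m
    have h := congrArg (Polynomial.eval (θ ^ (N + 1 + m))) (psi_rec Fq N)
    simp only [Polynomial.eval_mul, Polynomial.eval_C, Polynomial.eval_sub,
      Polynomial.eval_pow] at h
    have hNm : N + 1 + m = N + (m + 1) := by omega
    rw [hNm, ih (m + 1), hsym_frob] at h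
    have hI := hsym_I Fq 0 m N
    simp only [Nat.zero_add, pow_zero, pow_one] at hI h
    have hne : θ ^ q ^ (N + 1) - θ ≠ 0 := theta_E_ne Fq N
    apply mul_left_cancel₀ hne
    rw [hNm]
    linear_combination h + hI

lemma psi_eval_one (N : ℕ) : (Psi Fq N).eval (θ ^ N) = 1 := by
  have h := psi_eval_h Fq N 0
  rw [Nat.add_zero, hsym_zero] at h
  exact h

lemma eA_succ (N : ℕ) (h1 : eA Fq N = Polynomial.C (Dk Fq N) * Psi Fq N) :
    eA Fq (N + 1) = eA Fq N ^ q - Polynomial.C (Dk Fq N ^ (q - 1)) * eA Fq N := by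
  have hre : eA Fq (N + 1) = ∏ p : Fq × (Fin N → Fq),
      (Polynomial.X - Polynomial.C (σ (polyOf Fq p.2) + σ (Polynomial.C p.1) * θ ^ N)) := by
    rw [eA, ← Equiv.prod_comp (Fin.snocEquiv (fun _ => Fq))]
    apply Finset.prod_congr rfl
    intro p _
    congr 1
    have : (Fin.snocEquiv (fun _ => Fq)) p = Fin.snoc p.2 p.1 := rfl
    rw [this, polyOf_snoc, map_add, map_mul, map_pow, sigma_X]
  rw [hre, Fintype.prod_prod_type]
  have hinner : ∀ a : Fq, (∏ c : Fin N → Fq,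
      (Polynomial.X - Polynomial.C (σ (polyOf Fq c) + σ (Polynomial.C a) * θ ^ N)))
        = eA Fq N - Polynomial.C (σ (Polynomial.C a) * Dk Fq N) := by
    intro a
    have step1 : (∏ c : Fin N → Fq,
        (Polynomial.X - Polynomial.C (σ (polyOf Fq c) + σ (Polynomial.C a) * θ ^ N)))
          = (eA Fq N).comp (Polynomial.X - Polynomial.C (σ (Polynomial.C a) * θ ^ N)) := by
      rw [eA, Polynomial.prod_comp]
      apply Finset.prod_congr rfl
      intro c _
      rw [Polynomial.sub_comp, Polynomial.X_comp, Polynomial.C_comp, map_add]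
      ring
    rw [step1, h1, Polynomial.mul_comp, Polynomial.C_comp, psi_comp_sub, psi_eval_smul,
      psi_eval_one, mul_one, mul_sub, ← map_mul, mul_comm (Dk Fq N)]
  rw [Finset.prod_congr rfl (fun a _ => hinner a)]
  exact prod_linear Fq (eA Fq N) (Dk Fq N) (Dk_ne_zero Fq N)

lemma eA_eq (N : ℕ) : eA Fq N = Polynomial.C (Dk Fq N) * Psi Fq N := by
  induction N with
  | zero =>
    have hl : eA Fq 0 = Polynomial.X := by
      rw [eA]
      rw [Finset.univ_unique, Finset.prod_singleton]
      have : polyOf Fq (default : Fin 0 → Fq) = 0 := by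
        rw [polyOf]
        exact Finset.sum_of_isEmpty _
      rw [this, map_zero, map_zero, sub_zero]
    have hr : Psi Fq 0 = Polynomial.X := by
      rw [Psi]
      simp [Dk_zero, Lk_zero]
    rw [hl, hr, Dk_zero, map_one, one_mul]
  | succ N ih =>
    rw [eA_succ Fq N ih, ih, Dk_succ, map_mul, mul_assoc, psi_rec, mul_pow, ← map_pow]
    have hD : Polynomial.C (Dk Fq N ^ (q - 1)) * Polynomial.C (Dk Fq N)
        = Polynomial.C (Dk Fq N ^ q) := by
      rw [← map_mul, ← pow_succ, Nat.sub_add_cancel (le_of_lt (hq2 Fq))]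
    linear_combination (-(Psi Fq N)) * hD
theorem Psi_factorizations (N : ℕ) :
    Psi Fq N =
      Polynomial.C (Dk Fq N)⁻¹ *
        ∏ c : Fin N → Fq,
          (Polynomial.X - Polynomial.C
            (algebraMap (Polynomial Fq) (RatFunc Fq) (polyOf Fq c))) ∧
    Psi Fq N - 1 =
      Polynomial.C (Dk Fq N)⁻¹ *
        ∏ c : Fin N → Fq,
          (Polynomial.X - Polynomial.C
            (algebraMap (Polynomial Fq) (RatFunc Fq)
              (Polynomial.X ^ N + polyOf Fq c))) := by
  constructor
  · show Psi Fq N = Polynomial.C (Dk Fq N)⁻¹ * eA Fq N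
    rw [eA_eq, ← mul_assoc, ← map_mul, inv_mul_cancel₀ (Dk_ne_zero Fq N), map_one, one_mul]
  · have hcomp : (∏ c : Fin N → Fq,
        (Polynomial.X - Polynomial.C (σ (Polynomial.X ^ N + polyOf Fq c))))
          = (eA Fq N).comp (Polynomial.X - Polynomial.C (θ ^ N)) := by
      rw [eA, Polynomial.prod_comp]
      apply Finset.prod_congr rfl
      intro c _
      rw [Polynomial.sub_comp, Polynomial.X_comp, Polynomial.C_comp, map_add, map_pow, sigma_X, map_add]
      ring
    rw [hcomp, eA_eq, Polynomial.mul_comp, Polynomial.C_comp, psi_comp_sub, psi_eval_one,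
      map_one, ← mul_assoc, ← map_mul, inv_mul_cancel₀ (Dk_ne_zero Fq N), map_one, one_mul]


end
end

section
/- Suppose (M_i)_{i ∈ ℤ} is a family of finite-dimensional 𝕂-subspaces of H satisfying: (a) M_i = 0 for i < 0, M_i ⊆ M_{i+1} for all i, and the union of all M_i equals H; (b) M_i ∩ σ^ℓ(M_k) = σ^ℓ(M_{min(i, k+ℓ) − ℓ}) for all i, k ∈ ℤ and all ℓ ≥ 0; (c) M_i + σ(M_i) + ⋯ + σ^j(M_i) ⊆ M_{i+j} for all i ∈ ℤ and j ≥ 0; (d) there exists N ≥ 0 such that M_i = M_{i−1} + σ(M_{i−1}) for all i > N. Then there exists a finite subset S ⊆ M_N such that the family (σ^j(h))_{h ∈ S, j ≥ 0} is a 𝕂-basis of H; that is, H is a free module over the twisted polynomial ring 𝕂[σ] with basis S. -/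
/-!
Statement 14.  `𝕂` is a perfect field of characteristic `p` containing `F_q`
(`q = p^s`), `H` a `𝕂`-vector space, and `σ : H → H` an injective additive map with
`σ(c·h) = c^{1/q}·σ(h)` (the inverse `q`-power Frobenius `c ↦ c^{1/q}` is encoded by
a map `invFrob` with `(invFrob c)^q = c`, which determines it uniquely).  Given a
family `(M_i)_{i∈ℤ}` of finite-dimensional subspaces of `H` satisfying criteria
(a)–(d) below, there is a finite subset `S ⊆ M_N` such that the family
`(σ^j h)_{h∈S, j≥0}` is a `𝕂`-basis of `H`, i.e. `H` is free over `𝕂[σ]` with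
basis `S`.
-/

open Pointwise

theorem sigma_basis_intRecAux (Q : ℤ → Prop) (h0 : ∀ n : ℤ, n < 0 → Q n)
    (hstep : ∀ n : ℤ, 0 ≤ n → (∀ m : ℤ, m < n → Q m) → Q n) : ∀ n : ℤ, Q n := by
  have key : ∀ k : ℕ, ∀ n : ℤ, n < k → Q n := by
    intro k
    induction k with
    | zero => intro n hn; exact h0 n (by exact_mod_cast hn)
    | succ k ih =>
      intro n hn
      rcases lt_or_ge n 0 with h | h
      · exact h0 n h
      · exact hstep n h fun m hm => ih m (by omega)
  intro n
  rcases lt_or_ge n 0 with h | h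
  · exact h0 n h
  · exact key (n.toNat + 1) n (by omega)

theorem sigma_basis_of_filtration
    (p s : ℕ) (hp : p.Prime) (hs : 0 < s)
    (𝕂 : Type) [Field 𝕂] [CharP 𝕂 p] [ExpChar 𝕂 p] [PerfectRing 𝕂 p]
    -- `𝕂` contains `F_q`, `q = p^s`
    (Fq : Type) [Field Fq] [Fintype Fq] (hq : Fintype.card Fq = p ^ s)
    (ι : Fq →+* 𝕂)
    (H : Type) [AddCommGroup H] [Module 𝕂 H]
    -- the inverse `q`-power Frobenius `c ↦ c^{1/q}` of `𝕂`
    (invFrob : 𝕂 → 𝕂) (hinvFrob : ∀ c : 𝕂, invFrob c ^ (p ^ s) = c)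
    -- `σ`, injective, additive, `q⁻¹`-semilinear
    (σ : H →+ H) (hσinj : Function.Injective σ)
    (hσ : ∀ (c : 𝕂) (h : H), σ (c • h) = invFrob c • σ h)
    -- the filtration
    (M : ℤ → Submodule 𝕂 H)
    (hfin : ∀ i : ℤ, FiniteDimensional 𝕂 (M i))
    -- (a)
    (hneg : ∀ i : ℤ, i < 0 → M i = ⊥)
    (hmono : ∀ i : ℤ, M i ≤ M (i + 1))
    (hunion : ∀ h : H, ∃ i : ℤ, h ∈ M i)
    -- (b)
    (hb : ∀ (i k : ℤ) (ℓ : ℕ),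
      (M i : Set H) ∩ ((⇑σ)^[ℓ] '' (M k : Set H)) =
        (⇑σ)^[ℓ] '' (M (min i (k + ℓ) - ℓ) : Set H))
    -- (c)
    (hc : ∀ (i : ℤ) (j : ℕ) (x : Fin (j + 1) → H),
      (∀ m : Fin (j + 1), x m ∈ (⇑σ)^[(m : ℕ)] '' (M i : Set H)) →
        (∑ m : Fin (j + 1), x m) ∈ M (i + j))
    -- (d)
    (N : ℤ) (hN : 0 ≤ N)
    (hd : ∀ i : ℤ, N < i →
      (M i : Set H) = (M (i - 1) : Set H) + ⇑σ '' (M (i - 1) : Set H)) :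
    ∃ S : Finset H, (S : Set H) ⊆ (M N : Set H) ∧
      LinearIndependent 𝕂 (fun a : {x // x ∈ S} × ℕ => (⇑σ)^[a.2] a.1) ∧
      Submodule.span 𝕂 (Set.range (fun a : {x // x ∈ S} × ℕ => (⇑σ)^[a.2] a.1)) = ⊤ := by
  classical
  have hq0 : p ^ s ≠ 0 := pow_ne_zero s hp.pos.ne'
  set F : 𝕂 → 𝕂 := fun c => c ^ p ^ s with hF_def
  have hFinj : Function.Injective F := by
    intro a b hab
    have h2 : (a - b) ^ p ^ s = 0 := by
      rw [sub_pow_expChar_pow]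
      simp only [hF_def] at hab
      rw [hab, sub_self]
    have := pow_eq_zero_iff hq0 |>.mp h2
    exact sub_eq_zero.mp this
  have hFroot : ∀ c : 𝕂, F (invFrob c) = c := hinvFrob
  have hinvF : ∀ c : 𝕂, invFrob (F c) = c := fun c => hFinj (by rw [hFroot])
  have hσF : ∀ (c : 𝕂) (h : H), σ (F c • h) = c • σ h := fun c h => by
    rw [hσ, hinvF]
  have hσiter : ∀ (ℓ : ℕ) (c : 𝕂) (h : H),
      (⇑σ)^[ℓ] (F^[ℓ] c • h) = c • (⇑σ)^[ℓ] h := by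
    intro ℓ
    induction ℓ with
    | zero => intro c h; simp
    | succ n ih =>
      intro c h
      rw [Function.iterate_succ_apply' F, Function.iterate_succ_apply (⇑σ),
        Function.iterate_succ_apply (⇑σ), hσF, ih]
  have hF0 : ∀ (j : ℕ) (d : 𝕂), F^[j] d = 0 → d = 0 := by
    intro j
    induction j with
    | zero => intro d h; simpa using h
    | succ k ih =>
      intro d h
      rw [Function.iterate_succ_apply] at h
      have := ih _ h
      exact pow_eq_zero_iff hq0 |>.mp this
  have hiter_add : ∀ (ℓ : ℕ) (a b : H), (⇑σ)^[ℓ] (a + b) = (⇑σ)^[ℓ] a + (⇑σ)^[ℓ] b := by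
    intro ℓ
    induction ℓ with
    | zero => intro a b; simp
    | succ n ih =>
      intro a b
      rw [Function.iterate_succ_apply, Function.iterate_succ_apply,
        Function.iterate_succ_apply, map_add, ih]
  have hiter_zero : ∀ ℓ : ℕ, (⇑σ)^[ℓ] (0 : H) = 0 := by
    intro ℓ
    induction ℓ with
    | zero => simp
    | succ n ih => rw [Function.iterate_succ_apply, map_zero, ih]
  have hiter_sum : ∀ (ℓ : ℕ) (α : Type) (t : Finset α) (f : α → H),
      (⇑σ)^[ℓ] (∑ x ∈ t, f x) = ∑ x ∈ t, (⇑σ)^[ℓ] (f x) := by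
    intro ℓ α t f
    exact map_sum (AddMonoidHom.mk' ((⇑σ)^[ℓ]) (hiter_add ℓ)) f t
  have hmono' : ∀ {i j : ℤ}, i ≤ j → M i ≤ M j := by
    intro i j hij
    exact Int.le_induction (motive := fun j _ => M i ≤ M j) (le_refl (M i))
      (fun n _ h => h.trans (hmono n)) j hij
  -- σ^[m] maps M a into M (a + m)
  have hMσ : ∀ (a : ℤ) (m : ℕ) (x : H), x ∈ M a → (⇑σ)^[m] x ∈ M (a + m) := by
    intro a m x hx
    have hmem : ∀ k : Fin (m + 1),
        (if (k : ℕ) = m then (⇑σ)^[m] x else 0) ∈ (⇑σ)^[(k : ℕ)] '' (M a : Set H) := by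
      intro k
      by_cases hk : (k : ℕ) = m
      · rw [if_pos hk]; exact ⟨x, hx, by rw [hk]⟩
      · rw [if_neg hk]; exact ⟨0, (M a).zero_mem, hiter_zero _⟩
    have := hc a m (fun k => if (k : ℕ) = m then (⇑σ)^[m] x else 0) hmem
    have hsum : (∑ k : Fin (m + 1), if (k : ℕ) = m then (⇑σ)^[m] x else 0) = (⇑σ)^[m] x := by
      rw [Finset.sum_eq_single (Fin.last m)]
      · simp
      · intro k _ hk
        have hkm : (k : ℕ) ≠ m := fun h => hk (Fin.ext (by simpa using h))
        rw [if_neg hkm]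
      · intro h; exact absurd (Finset.mem_univ _) h
    rwa [hsum] at this
  have hσM1 : ∀ (a : ℤ) (x : H), x ∈ M a → σ x ∈ M (a + 1) := by
    intro a x hx
    have := hMσ a 1 x hx
    simpa using this
  -- the "boundary" subspaces
  set D : ℤ → Submodule 𝕂 H :=
    fun i => Submodule.span 𝕂 ((M (i - 1) : Set H) ∪ ⇑σ '' (M (i - 1) : Set H)) with hD_def
  have hMD : ∀ (i : ℤ) (x : H), x ∈ M (i - 1) → x ∈ D i := by
    intro i x hx
    exact Submodule.subset_span (Set.mem_union_left _ hx)
  have hσD : ∀ (i : ℤ) (x : H), x ∈ M (i - 1) → σ x ∈ D i := by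
    intro i x hx
    exact Submodule.subset_span (Set.mem_union_right _ ⟨x, hx, rfl⟩)
  have hDM : ∀ i : ℤ, D i ≤ M i := by
    intro i
    rw [hD_def]
    apply Submodule.span_le.mpr
    rintro x (hx | ⟨y, hy, rfl⟩)
    · exact hmono' (by omega) hx
    · have := hσM1 (i - 1) y hy
      rwa [show i - 1 + 1 = i by ring] at this
  -- choose complements of `D i` inside `M i`
  have hT : ∀ i : ℤ, 0 ≤ i → i ≤ N → ∃ T : Finset H,
      (T : Set H) ⊆ (M i : Set H) ∧ M i ≤ D i ⊔ Submodule.span 𝕂 (T : Set H) ∧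
      ∀ c : H → 𝕂, (∑ x ∈ T, c x • x) ∈ D i → ∀ x ∈ T, c x = 0 := by
    intro i _ _
    haveI := hfin i
    set π := (D i).mkQ with hπ_def
    haveI : Module.Finite 𝕂 ((M i).map π) := Module.Finite.map (M i) π
    set b := Module.finBasis 𝕂 ((M i).map π) with hb_def
    have hbmem : ∀ k, ∃ y, y ∈ M i ∧ π y = (b k : H ⧸ D i) := by
      intro k
      have := (b k).2
      rw [Submodule.mem_map] at this
      obtain ⟨y, hy, hπy⟩ := this
      exact ⟨y, hy, hπy⟩
    choose t ht1 ht2 using hbmem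
    have htinj : Function.Injective t := by
      intro k l hkl
      have hval : (b k : H ⧸ D i) = (b l : H ⧸ D i) := by rw [← ht2, ← ht2, hkl]
      exact b.injective (Subtype.ext hval)
    refine ⟨Finset.image t Finset.univ, ?_, ?_, ?_⟩
    · intro x hx
      obtain ⟨k, _, rfl⟩ := Finset.mem_image.mp hx
      exact ht1 k
    · intro x hx
      have hmem : π x ∈ (M i).map π := Submodule.mem_map_of_mem hx
      set cx := b.repr ⟨π x, hmem⟩ with hcx_def
      have hrepr : ∑ k, cx k • b k = (⟨π x, hmem⟩ : (M i).map π) := b.sum_repr ⟨π x, hmem⟩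
      have hπx : π x = ∑ k, cx k • π (t k) := by
        have hval := congrArg Subtype.val hrepr
        push_cast at hval
        rw [← hval]
        refine Finset.sum_congr rfl fun k _ => ?_
        rw [ht2]
      have hker : x - ∑ k, cx k • t k ∈ D i := by
        have hπ0 : π (x - ∑ k, cx k • t k) = 0 := by
          rw [map_sub, map_sum]
          simp only [map_smul]
          rw [← hπx, sub_self]
        exact (Submodule.Quotient.mk_eq_zero _).mp hπ0
      have hx_eq : x = (x - ∑ k, cx k • t k) + ∑ k, cx k • t k := by abel
      rw [hx_eq]
      refine Submodule.add_mem _ (Submodule.mem_sup_left hker) (Submodule.mem_sup_right ?_)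
      refine Submodule.sum_mem _ fun k _ => Submodule.smul_mem _ _ ?_
      exact Submodule.subset_span (by simp)
    · intro c hcsum x hx
      rw [Finset.sum_image (fun k _ l _ h => htinj h)] at hcsum
      have hπ0 : (∑ k, c (t k) • b k) = (0 : ((M i).map π)) := by
        apply Subtype.val_injective
        push_cast
        have : ∑ k, c (t k) • ((b k : H ⧸ D i)) = π (∑ k, c (t k) • t k) := by
          rw [map_sum]
          refine Finset.sum_congr rfl fun k _ => ?_
          rw [map_smul, ht2]
        rw [this]
        exact (Submodule.Quotient.mk_eq_zero _).mpr hcsum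
      have hlin := Fintype.linearIndependent_iff.mp b.linearIndependent
        (fun k => c (t k)) hπ0
      obtain ⟨k, _, rfl⟩ := Finset.mem_image.mp hx
      exact hlin k
  have hTall : ∀ i : ℤ, ∃ T : Finset H,
      ((0 ≤ i ∧ i ≤ N) → ((T : Set H) ⊆ (M i : Set H) ∧
        M i ≤ D i ⊔ Submodule.span 𝕂 (T : Set H) ∧
        ∀ c : H → 𝕂, (∑ x ∈ T, c x • x) ∈ D i → ∀ x ∈ T, c x = 0)) ∧
      (¬(0 ≤ i ∧ i ≤ N) → T = ∅) := by
    intro i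
    by_cases h : 0 ≤ i ∧ i ≤ N
    · obtain ⟨T, hT⟩ := hT i h.1 h.2
      exact ⟨T, fun _ => hT, fun hcon => absurd h hcon⟩
    · exact ⟨∅, fun hcon => absurd hcon h, fun _ => rfl⟩
  choose Sfin hSfin using hTall
  have hSM : ∀ i : ℤ, (Sfin i : Set H) ⊆ (M i : Set H) := by
    intro i
    by_cases h : 0 ≤ i ∧ i ≤ N
    · exact ((hSfin i).1 h).1
    · rw [(hSfin i).2 h]; simp
  have hSempty : ∀ i : ℤ, ¬(0 ≤ i ∧ i ≤ N) → Sfin i = ∅ := fun i h => (hSfin i).2 h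
  -- the pieces of the grading and their partial sups
  set V : ℤ → Submodule 𝕂 H := fun i => Submodule.span 𝕂 (Sfin i : Set H) with hV_def
  set W : ℤ → Submodule 𝕂 H := fun n => ⨆ (i : ℤ) (_ : i ≤ n), V i with hW_def
  have hVbot : ∀ i : ℤ, ¬(0 ≤ i ∧ i ≤ N) → V i = ⊥ := by
    intro i h
    rw [hV_def]
    simp only [hSempty i h]
    simp
  have hVM : ∀ i : ℤ, V i ≤ M i := by
    intro i
    rw [hV_def]
    exact Submodule.span_le.mpr (hSM i)
  have hWM : ∀ n : ℤ, W n ≤ M n := by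
    intro n
    rw [hW_def]
    exact iSup₂_le fun i hi => (hVM i).trans (hmono' hi)
  have hWbot : ∀ n : ℤ, n < 0 → W n = ⊥ := by
    intro n hn
    rw [hW_def]
    refine le_bot_iff.mp (iSup₂_le fun i hi => ?_)
    rw [hVbot i (by omega)]
  have hWsplit : ∀ n : ℤ, W n = W (n - 1) ⊔ V n := by
    intro n
    rw [hW_def]
    apply le_antisymm
    · apply iSup₂_le
      intro i hi
      rcases eq_or_lt_of_le hi with rfl | h
      · exact le_sup_right
      · exact le_trans (le_iSup₂ (f := fun i (_ : i ≤ n - 1) => V i) i (by omega)) le_sup_left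
    · apply sup_le
      · apply iSup₂_le
        intro i hi
        exact le_iSup₂ (f := fun i (_ : i ≤ n) => V i) i (by omega)
      · exact le_iSup₂ (f := fun i (_ : i ≤ n) => V i) n le_rfl
  have hVD : ∀ n : ℤ, 0 ≤ n → n ≤ N → ∀ y ∈ V n, y ∈ D n → y = 0 := by
    intro n h0 hn y hy hyD
    rw [hV_def] at hy
    obtain ⟨f, -, hf⟩ := Submodule.mem_span_finset.mp hy
    have := ((hSfin n).1 ⟨h0, hn⟩).2.2 f (by rwa [hf])
    rw [← hf]
    exact Finset.sum_eq_zero fun x hx => by rw [this x hx, zero_smul]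
  -- the key triviality claim: W n ∩ σ(M (n-1)) = 0
  have hClaim : ∀ n : ℤ, ∀ x : H, x ∈ W n → x ∈ ⇑σ '' (M (n - 1) : Set H) → x = 0 := by
    refine sigma_basis_intRecAux _ ?_ ?_
    · intro n hn x hxW _
      rw [hWbot n hn] at hxW
      simpa using hxW
    · intro n h0 IH x hxW hxσ
      obtain ⟨m, hm, hxm⟩ := hxσ
      rw [hWsplit n] at hxW
      obtain ⟨y, hy, v, hv, hyv⟩ := Submodule.mem_sup.mp hxW
      have hyM : y ∈ M (n - 1) := hWM (n - 1) hy
      have hvD : v ∈ D n := by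
        have h1 : σ m ∈ D n := hσD n m hm
        have h2 : y ∈ D n := hMD n y hyM
        have hveq : v = x - y := by rw [← hyv]; abel
        rw [hveq, ← hxm]
        exact Submodule.sub_mem _ h1 h2
      have hv0 : v = 0 := by
        by_cases hn : n ≤ N
        · exact hVD n h0 hn v hv hvD
        · rw [hVbot n (by omega)] at hv; simpa using hv
      have hyx : y = x := by rw [← hyv, hv0, add_zero]
      have hy2 : y ∈ (M (n - 1) : Set H) ∩ ((⇑σ)^[1] '' (M (n - 1) : Set H)) := by
        refine ⟨hyM, ?_⟩
        rw [Function.iterate_one]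
        exact ⟨m, hm, by rw [hxm, hyx]⟩
      rw [hb (n - 1) (n - 1) 1] at hy2
      obtain ⟨m', hm', hym'⟩ := hy2
      rw [show (min (n-1) (n-1+((1:ℕ):ℤ)) - ((1:ℕ):ℤ)) = n - 1 - 1 by push_cast; omega] at hm'
      have hy0 : y = 0 := IH (n - 1) (by omega) y hy
        ⟨m', hm', by rw [← hym', Function.iterate_one]⟩
      rw [← hyx, hy0]
  -- the key linear-independence engine
  have hL1 : ∀ (J : ℕ) (w : ℕ → H), (∀ j, w j ∈ W N) →
      (∑ j ∈ Finset.range (J + 1), (⇑σ)^[j] (w j)) = 0 → ∀ j < J + 1, w j = 0 := by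
    intro J
    induction J with
    | zero =>
      intro w hw hsum j hj
      have hj0 : j = 0 := by omega
      subst hj0
      simpa using hsum
    | succ J ih =>
      intro w hw hsum j hj
      rw [Finset.sum_range_succ'] at hsum
      rw [Function.iterate_zero_apply] at hsum
      set z := ∑ j ∈ Finset.range (J + 1), (⇑σ)^[j] (w (j + 1)) with hz_def
      have hσz : (∑ j ∈ Finset.range (J + 1), (⇑σ)^[j + 1] (w (j + 1))) = σ z := by
        rw [hz_def, map_sum]
        exact Finset.sum_congr rfl fun j _ => Function.iterate_succ_apply' (⇑σ) j (w (j + 1))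
      rw [hσz] at hsum
      have hzM : z ∈ M (N + (J : ℤ)) := by
        rw [hz_def]
        refine Submodule.sum_mem _ fun j hjr => ?_
        have h1 : w (j + 1) ∈ M N := hWM N (hw (j + 1))
        have h2 := hMσ N j _ h1
        have hle : (j : ℤ) ≤ (J : ℤ) := by
          have := Finset.mem_range.mp hjr
          exact_mod_cast Nat.lt_succ_iff.mp this
        exact hmono' (by omega) h2
      have hw0mem : w 0 ∈ (M N : Set H) ∩ ((⇑σ)^[1] '' (M (N + (J : ℤ)) : Set H)) := by
        refine ⟨hWM N (hw 0), ?_⟩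
        rw [Function.iterate_one]
        refine ⟨-z, Submodule.neg_mem _ hzM, ?_⟩
        rw [map_neg]
        exact (eq_neg_of_add_eq_zero_right hsum).symm
      rw [hb N (N + (J : ℤ)) 1] at hw0mem
      obtain ⟨m', hm', hwm'⟩ := hw0mem
      rw [show (min N (N + (J:ℤ) + ((1:ℕ):ℤ)) - ((1:ℕ):ℤ)) = N - 1 by push_cast; omega] at hm'
      have hw00 : w 0 = 0 := hClaim N (w 0) (hw 0)
        ⟨m', hm', by rw [← hwm', Function.iterate_one]⟩
      have hz0 : z = 0 := by
        apply hσinj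
        rw [map_zero]
        rw [hw00, add_zero] at hsum
        exact hsum
      have hrest := ih (fun j => w (j + 1)) (fun j => hw (j + 1)) (by exact hz0)
      rcases Nat.eq_zero_or_pos j with rfl | hjpos
      · exact hw00
      · obtain ⟨k, rfl⟩ := Nat.exists_eq_succ_of_ne_zero (n := j) (by omega)
        exact hrest k (by omega)
  -- disjointness of the chosen finsets
  have hdisjP : (↑(Finset.Icc (0:ℤ) N) : Set ℤ).PairwiseDisjoint Sfin := by
    have key : ∀ i j : ℤ, 0 ≤ i → 0 ≤ j → j ≤ N → i < j → Disjoint (Sfin i) (Sfin j) := by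
      intro i j h0i h0j hjN hij
      rw [Finset.disjoint_left]
      intro x hxi hxj
      have hxD : x ∈ D j := hMD j x (hmono' (by omega) (hSM i hxi))
      have hsumx : (∑ y ∈ Sfin j, (if y = x then (1:𝕂) else 0) • y) ∈ D j := by
        have he : (∑ y ∈ Sfin j, (if y = x then (1:𝕂) else 0) • y) = x := by
          simp only [ite_smul, one_smul, zero_smul]
          rw [Finset.sum_ite_eq' (Sfin j) x (fun y => y)]
          rw [if_pos hxj]
        rw [he]
        exact hxD
      have := ((hSfin j).1 ⟨h0j, hjN⟩).2.2 _ hsumx x hxj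
      simp at this
    intro i hi j hj hij
    simp only [Finset.coe_Icc, Set.mem_Icc] at hi hj
    rcases hij.lt_or_gt with h | h
    · exact key i j hi.1 hj.1 hj.2 h
    · exact (key j i hj.1 hi.1 hi.2 h).symm
  -- the basis set
  set S : Finset H := (Finset.Icc (0:ℤ) N).biUnion Sfin with hS_def
  have hSsubN : (S : Set H) ⊆ (M N : Set H) := by
    intro x hx
    have hx' : x ∈ (Finset.Icc (0:ℤ) N).biUnion Sfin := by rw [← hS_def]; exact hx
    obtain ⟨i, hi, hxi⟩ := Finset.mem_biUnion.mp hx'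
    exact hmono' (Finset.mem_Icc.mp hi).2 (hSM i hxi)
  -- linear independence of S itself
  have hL2 : ∀ c : H → 𝕂, (∑ x ∈ S, c x • x) = 0 → ∀ x ∈ S, c x = 0 := by
    intro c hc0 x hx
    have hsplit : (∑ i ∈ Finset.Icc (0:ℤ) N, ∑ y ∈ Sfin i, c y • y) = 0 := by
      rw [← Finset.sum_biUnion hdisjP, ← hS_def]
      exact hc0
    have key : ∀ n : ℤ,
        (∑ i ∈ Finset.Icc (0:ℤ) n, ∑ y ∈ Sfin i, c y • y) = 0 →
        ∀ i ∈ Finset.Icc (0:ℤ) n, ∀ y ∈ Sfin i, c y = 0 := by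
      refine sigma_basis_intRecAux _ ?_ ?_
      · intro n hn _ i hi
        rw [Finset.Icc_eq_empty (by omega)] at hi
        simp at hi
      · intro n h0 IH hsum i hi y hy
        have hins : Finset.Icc (0:ℤ) n = insert n (Finset.Icc 0 (n - 1)) := by
          ext m
          simp only [Finset.mem_Icc, Finset.mem_insert]
          omega
        rw [hins, Finset.sum_insert (by simp only [Finset.mem_Icc]; omega)] at hsum
        have hrest : (∑ i ∈ Finset.Icc (0:ℤ) (n - 1), ∑ y ∈ Sfin i, c y • y) ∈ M (n - 1) :=
          Submodule.sum_mem _ fun i' hi' => Submodule.sum_mem _ fun y' hy' =>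
            Submodule.smul_mem _ _ (hmono' (Finset.mem_Icc.mp hi').2 (hSM i' hy'))
        have hunD : (∑ y ∈ Sfin n, c y • y) ∈ D n := by
          have heq : (∑ y ∈ Sfin n, c y • y)
              = -(∑ i ∈ Finset.Icc (0:ℤ) (n - 1), ∑ y ∈ Sfin i, c y • y) :=
            eq_neg_of_add_eq_zero_left hsum
          rw [heq]
          exact Submodule.neg_mem _ (hMD n _ hrest)
        have hallzero : ∀ y ∈ Sfin n, c y = 0 := by
          by_cases hn : n ≤ N
          · exact ((hSfin n).1 ⟨h0, hn⟩).2.2 c hunD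
          · intro y' hy'
            rw [hSempty n (by omega)] at hy'
            simp at hy'
        have hun0 : (∑ y ∈ Sfin n, c y • y) = 0 :=
          Finset.sum_eq_zero fun y' hy' => by rw [hallzero y' hy', zero_smul]
        rw [hun0, zero_add] at hsum
        rcases Finset.mem_Icc.mp hi with ⟨hi1, hi2⟩
        by_cases hin : i = n
        · subst hin; exact hallzero y hy
        · exact IH (n - 1) (by omega) hsum i (Finset.mem_Icc.mpr ⟨hi1, by omega⟩) y hy
    have hx2 : x ∈ (Finset.Icc (0:ℤ) N).biUnion Sfin := by rw [← hS_def]; exact hx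
    obtain ⟨i, hi, hyi⟩ := Finset.mem_biUnion.mp hx2
    exact key N hsplit i hi x hyi
  refine ⟨S, hSsubN, ?_, ?_⟩
  · -- linear independence
    rw [linearIndependent_iff']
    intro t g hrel a hat
    set J := t.sup Prod.snd with hJ_def
    have haJ : a.2 < J + 1 := Nat.lt_succ_of_le (Finset.le_sup (f := Prod.snd) hat)
    set g' : {x // x ∈ S} × ℕ → 𝕂 := fun b => if b ∈ t then g b else 0 with hg'_def
    have hsub : t ⊆ S.attach ×ˢ Finset.range (J + 1) := by
      intro b hbt
      exact Finset.mem_product.mpr ⟨Finset.mem_attach _ _,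
        Finset.mem_range.mpr (Nat.lt_succ_of_le (Finset.le_sup (f := Prod.snd) hbt))⟩
    have hrel2 : (∑ b ∈ S.attach ×ˢ Finset.range (J + 1), g' b • (⇑σ)^[b.2] (b.1 : H)) = 0 := by
      have e1 : (∑ b ∈ t, g' b • (⇑σ)^[b.2] (b.1 : H))
          = ∑ b ∈ S.attach ×ˢ Finset.range (J + 1), g' b • (⇑σ)^[b.2] (b.1 : H) :=
        Finset.sum_subset hsub (fun b _ hbt => by
          simp only [hg'_def]
          rw [if_neg hbt, zero_smul])
      have e2 : (∑ b ∈ t, g' b • (⇑σ)^[b.2] (b.1 : H))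
          = ∑ b ∈ t, g b • (⇑σ)^[b.2] (b.1 : H) :=
        Finset.sum_congr rfl fun b hbt => by
          simp only [hg'_def]
          rw [if_pos hbt]
      rw [← e1, e2]
      exact hrel
    set w : ℕ → H := fun j => ∑ x ∈ S.attach, F^[j] (g' (x, j)) • (x : H) with hw_def
    have hww : ∀ j, (⇑σ)^[j] (w j) = ∑ x ∈ S.attach, g' (x, j) • (⇑σ)^[j] (x : H) := by
      intro j
      simp only [hw_def]
      rw [hiter_sum j _ S.attach _]
      exact Finset.sum_congr rfl fun x _ => hσiter j _ _
    have hsum0 : (∑ j ∈ Finset.range (J + 1), (⇑σ)^[j] (w j)) = 0 := by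
      calc (∑ j ∈ Finset.range (J + 1), (⇑σ)^[j] (w j))
          = ∑ j ∈ Finset.range (J + 1), ∑ x ∈ S.attach, g' (x, j) • (⇑σ)^[j] (x : H) :=
            Finset.sum_congr rfl fun j _ => hww j
        _ = ∑ x ∈ S.attach, ∑ j ∈ Finset.range (J + 1), g' (x, j) • (⇑σ)^[j] (x : H) :=
            Finset.sum_comm
        _ = ∑ b ∈ S.attach ×ˢ Finset.range (J + 1), g' b • (⇑σ)^[b.2] (b.1 : H) :=
            (Finset.sum_product (s := S.attach) (t := Finset.range (J + 1))
              (f := fun b => g' b • (⇑σ)^[b.2] (b.1 : H))).symm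
        _ = 0 := hrel2
    have hwW : ∀ j, w j ∈ W N := by
      intro j
      simp only [hw_def]
      refine Submodule.sum_mem _ fun x _ => Submodule.smul_mem _ _ ?_
      have hx' : (x : H) ∈ (Finset.Icc (0:ℤ) N).biUnion Sfin := by
        rw [← hS_def]; exact x.2
      obtain ⟨i, hi, hxi⟩ := Finset.mem_biUnion.mp hx'
      have hxV : (x : H) ∈ V i := by
        rw [hV_def]
        exact Submodule.subset_span hxi
      have hle : V i ≤ W N := by
        rw [hW_def]
        exact le_iSup₂ (f := fun i (_ : i ≤ N) => V i) i (Finset.mem_Icc.mp hi).2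
      exact hle hxV
    have hwj0 := hL1 J w hwW hsum0
    set c : H → 𝕂 := fun y => if h : y ∈ S then F^[a.2] (g' (⟨y, h⟩, a.2)) else 0 with hc_def
    have h1 : (∑ x ∈ S, c x • x) = 0 := by
      have e1 : (∑ x ∈ S, c x • x) = ∑ x ∈ S.attach, c (x : H) • (x : H) :=
        (Finset.sum_attach S (fun y => c y • y)).symm
      have e2 : (∑ x ∈ S.attach, c (x : H) • (x : H)) = w a.2 := by
        simp only [hw_def]
        refine Finset.sum_congr rfl fun x _ => ?_
        simp only [hc_def]
        rw [dif_pos x.2, Subtype.coe_eta]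
      rw [e1, e2]
      exact hwj0 a.2 haJ
    have h2 := hL2 c h1 (a.1 : H) a.1.2
    simp only [hc_def] at h2
    rw [dif_pos a.1.2, Subtype.coe_eta] at h2
    have h3 : g' (a.1, a.2) = 0 := hF0 a.2 _ h2
    simp only [hg'_def] at h3
    rw [Prod.mk.eta, if_pos hat] at h3
    exact h3
  · -- spanning
    have hσP : ∀ x ∈ Submodule.span 𝕂
        (Set.range (fun a : {x // x ∈ S} × ℕ => (⇑σ)^[a.2] (a.1 : H))),
        σ x ∈ Submodule.span 𝕂
        (Set.range (fun a : {x // x ∈ S} × ℕ => (⇑σ)^[a.2] (a.1 : H))) := by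
      intro x hx
      induction hx using Submodule.span_induction with
      | mem x hx =>
        obtain ⟨⟨xs, j⟩, rfl⟩ := hx
        exact Submodule.subset_span ⟨(xs, j + 1), Function.iterate_succ_apply' (⇑σ) j xs⟩
      | zero => rw [map_zero]; exact Submodule.zero_mem _
      | add a b _ _ ha hb' => rw [map_add]; exact Submodule.add_mem _ ha hb'
      | smul c a _ ha => rw [hσ]; exact Submodule.smul_mem _ _ ha
    have hMP : ∀ n : ℤ, ∀ x ∈ M n, x ∈ Submodule.span 𝕂
        (Set.range (fun a : {x // x ∈ S} × ℕ => (⇑σ)^[a.2] (a.1 : H))) := by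
      refine sigma_basis_intRecAux _ ?_ ?_
      · intro n hn x hx
        rw [hneg n hn, Submodule.mem_bot] at hx
        rw [hx]
        exact Submodule.zero_mem _
      · intro n h0 IH x hx
        by_cases hn : n ≤ N
        · have hsp := ((hSfin n).1 ⟨h0, hn⟩).2.1
          obtain ⟨d, hdD, v, hv, rfl⟩ := Submodule.mem_sup.mp (hsp hx)
          refine Submodule.add_mem _ ?_ ?_
          · have hDP : D n ≤ Submodule.span 𝕂
                (Set.range (fun a : {x // x ∈ S} × ℕ => (⇑σ)^[a.2] (a.1 : H))) := by
              rw [hD_def]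
              apply Submodule.span_le.mpr
              rintro y (hy | ⟨z, hz, rfl⟩)
              · exact IH (n - 1) (by omega) y hy
              · exact hσP z (IH (n - 1) (by omega) z hz)
            exact hDP hdD
          · refine Submodule.span_le.mpr ?_ hv
            intro y hy
            have hyS : y ∈ S := by
              rw [hS_def]
              exact Finset.mem_biUnion.mpr ⟨n, Finset.mem_Icc.mpr ⟨h0, hn⟩, hy⟩
            exact Submodule.subset_span ⟨(⟨y, hyS⟩, 0), rfl⟩
        · have hx' : x ∈ (M n : Set H) := hx
          rw [hd n (by omega)] at hx'
          obtain ⟨a, ha, bb, hbb, hab⟩ := hx'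
          obtain ⟨zz, hzz, rfl⟩ := hbb
          rw [← hab]
          exact Submodule.add_mem _ (IH (n - 1) (by omega) a ha)
            (hσP zz (IH (n - 1) (by omega) zz hzz))
    rw [eq_top_iff]
    intro x _
    obtain ⟨i, hi⟩ := hunion x
    exact hMP i x hi
end

section
/- Let F be a field, N a natural number, and for all 0 ≤ i ≤ j ≤ N let V_{i,j} be a finite-dimensional F-vector space. Suppose given injective F-linear maps ρ_{i,j} : V_{i,j−1} → V_{i,j} for 0 ≤ i < j ≤ N and δ_{i,j} : V_{i−1,j} → V_{i,j} for 0 < i ≤ j ≤ N, such that for all 0 < i < j ≤ N one has δ_{i,j} ∘ ρ_{i−1,j} = ρ_{i,j} ∘ δ_{i,j−1}, and the induced map from V_{i−1,j−1} to the fibre product V_{i,j−1} ×_{V_{i,j}} V_{i−1,j} (formed with respect to ρ_{i,j} and δ_{i,j}) is an isomorphism — equivalently, ρ_{i,j}(V_{i,j−1}) ∩ δ_{i,j}(V_{i−1,j}) = (δ_{i,j} ∘ ρ_{i−1,j})(V_{i−1,j−1}). Then for all 0 ≤ i ≤ j ≤ N one can choose finite subsets D_{i,j}, R_{i,j}, Z_{i,j}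 of V_{i,j} such that: (a) Z_{i,j} is an F-basis of V_{i,j}; (b) for 0 < i ≤ j ≤ N, Z_{i,j} is the disjoint union of δ_{i,j}(Z_{i−1,j}) and D_{i,j}; (c) for 0 ≤ i < j ≤ N, Z_{i,j} is the disjoint union of ρ_{i,j}(Z_{i,j−1}) and R_{i,j}; (d) for 0 < i < j ≤ N, Z_{i,j} is the disjoint union of (δ_{i,j} ∘ ρ_{i−1,j})(Z_{i−1,j−1}), ρ_{i,j}(D_{i,j−1}), δ_{i,j}(R_{i−1,j}), and D_{i,j} ∩ R_{i,j}. -/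
/-!
Statement 15 (triangle lemma for extending bases).  `F` is a field and
`V i j` (for `0 ≤ i ≤ j ≤ N`) finite-dimensional `F`-vector spaces equipped with
injective linear maps.  Here the maps are re-indexed as
`ρ i j : V i j → V i (j+1)` (the map `ρ_{i,j+1} : V_{i,j} → V_{i,j+1}` of the
statement) and `δ i j : V i j → V (i+1) j` (the map `δ_{i+1,j} : V_{i,j} → V_{i+1,j}`
of the statement).  Assuming the squares commute and satisfy the fibre-product
condition `range ρ ∩ range δ = range (δ ∘ ρ)`, one can choose finite subsets
`D i j`, `R i j`, `Z i j ⊆ V i j` such that: (a) `Z i j` is a basis of `V i j`;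
(b) `Z_{i,j} = δ(Z_{i−1,j}) ⊔ D_{i,j}`; (c) `Z_{i,j} = ρ(Z_{i,j−1}) ⊔ R_{i,j}`;
(d) `Z_{i,j} = (δ∘ρ)(Z_{i−1,j−1}) ⊔ ρ(D_{i,j−1}) ⊔ δ(R_{i−1,j}) ⊔ (D_{i,j} ∩ R_{i,j})`
(all unions disjoint), for the appropriate index ranges.
-/

open scoped Classical

open Submodule

section helpers
variable {F : Type} [Field F] {W W' : Type} [AddCommGroup W] [Module F W]
  [AddCommGroup W'] [Module F W']

/-- `s` is linearly independent as a finset. -/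
def FinLI (F : Type) [Field F] {W : Type} [AddCommGroup W] [Module F W]
    (s : Finset W) : Prop :=
  LinearIndependent F (fun x : {v // v ∈ s} => (x : W))

lemma finLI_iff_set (s : Finset W) :
    FinLI F s ↔ LinearIndependent F (fun x : (s : Set W) => (x : W)) :=
  Iff.rfl

lemma exists_extend_finset [FiniteDimensional F W] (s : Finset W)
    (hs : FinLI F s) :
    ∃ T : Finset W, Disjoint s T ∧ FinLI F (s ∪ T) ∧
      Submodule.span F ((s ∪ T : Finset W) : Set W) = ⊤ := by
  rw [finLI_iff_set] at hs
  replace hs : LinearIndepOn F id (s : Set W) := hs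
  have h1 := hs.linearIndepOn_extend (Set.subset_univ (s : Set W))
  have hfin : (hs.extend (Set.subset_univ _)).Finite := LinearIndependent.setFinite h1
  have hsub : (s : Set W) ⊆ hs.extend (Set.subset_univ _) := hs.subset_extend _
  have hst : s ⊆ hfin.toFinset := fun x hx => hfin.mem_toFinset.2 (hsub hx)
  have hset : ((s ∪ (hfin.toFinset \ s) : Finset W) : Set W)
      = hs.extend (Set.subset_univ _) := by
    rw [Finset.union_sdiff_of_subset hst, Set.Finite.coe_toFinset]
  refine ⟨hfin.toFinset \ s, Finset.disjoint_sdiff, ?_, ?_⟩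
  · rw [finLI_iff_set, hset]; exact h1
  · rw [hset]
    exact eq_top_iff.2 fun x _ => hs.subset_span_extend _ (Set.mem_univ x)

lemma exists_basis_finset (F : Type) [Field F] (W : Type) [AddCommGroup W] [Module F W]
    [FiniteDimensional F W] :
    ∃ Z : Finset W, FinLI F Z ∧ Submodule.span F (Z : Set W) = ⊤ := by
  obtain ⟨T, -, h1, h2⟩ := exists_extend_finset (F := F) (∅ : Finset W)
    (by rw [finLI_iff_set, Finset.coe_empty]; exact linearIndependent_empty F W)
  rw [Finset.empty_union] at h1 h2
  exact ⟨T, h1, h2⟩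

lemma li_image (f : W →ₗ[F] W') (hf : Function.Injective f) {s : Finset W}
    (hs : FinLI F s) : FinLI F (s.image f) := by
  rw [finLI_iff_set] at hs ⊢
  have h2 : LinearIndependent F (fun x : (s : Set W) => f x) :=
    hs.map' f (LinearMap.ker_eq_bot.2 hf)
  have h3 : LinearIndepOn F id (f '' (s : Set W)) := LinearIndepOn.id_image h2
  rw [Finset.coe_image]
  exact h3

lemma li_subset {s t : Finset W} (hst : s ⊆ t) (ht : FinLI F t) : FinLI F s := by
  rw [finLI_iff_set] at ht ⊢
  exact LinearIndepOn.mono (v := id) ht (by exact_mod_cast hst)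

lemma li_union {s t : Finset W} (hs : FinLI F s) (ht : FinLI F t)
    (h : Disjoint (Submodule.span F (s : Set W)) (Submodule.span F (t : Set W))) :
    FinLI F (s ∪ t) := by
  rw [finLI_iff_set] at hs ht ⊢
  have := LinearIndepOn.id_union hs ht h
  rw [Finset.coe_union]
  exact this

lemma disjoint_span_of_disjoint {Z s t : Finset W}
    (hZ : FinLI F Z) (hs : s ⊆ Z) (ht : t ⊆ Z) (hst : Disjoint s t) :
    Disjoint (Submodule.span F (s : Set W)) (Submodule.span F (t : Set W)) := by
  rw [finLI_iff_set] at hZ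
  have hd : Disjoint ((fun x : (Z : Set W) => (x : W)) ⁻¹' (s : Set W))
      ((fun x : (Z : Set W) => (x : W)) ⁻¹' (t : Set W)) :=
    Disjoint.preimage _ (Finset.disjoint_coe.2 hst)
  have h2 := hZ.disjoint_span_image hd
  have e1 : (fun x : (Z : Set W) => (x : W)) '' ((fun x : (Z : Set W) => (x : W)) ⁻¹' (s : Set W)) = (s : Set W) := by
    rw [show (fun x : (Z : Set W) => (x : W)) = ((↑) : _ → W) from rfl,
      Subtype.image_preimage_coe]
    exact Set.inter_eq_right.2 (by exact_mod_cast hs)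
  have e2 : (fun x : (Z : Set W) => (x : W)) '' ((fun x : (Z : Set W) => (x : W)) ⁻¹' (t : Set W)) = (t : Set W) := by
    rw [show (fun x : (Z : Set W) => (x : W)) = ((↑) : _ → W) from rfl,
      Subtype.image_preimage_coe]
    exact Set.inter_eq_right.2 (by exact_mod_cast ht)
  rwa [e1, e2] at h2

lemma finset_disjoint_of_span_disjoint {s t : Finset W}
    (hs : FinLI F s)
    (h : Disjoint (Submodule.span F (s : Set W)) (Submodule.span F (t : Set W))) :
    Disjoint s t := by
  rw [Finset.disjoint_left]
  intro a ha hat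
  have h0 : a = 0 :=
    (Submodule.disjoint_def.1 h) a (subset_span (Finset.mem_coe.2 ha))
      (subset_span (Finset.mem_coe.2 hat))
  rw [finLI_iff_set] at hs
  exact hs.ne_zero ⟨a, Finset.mem_coe.2 ha⟩ h0

end helpers

set_option maxHeartbeats 2000000 in
theorem triangle_basis_extension
    (F : Type) [Field F] (N : ℕ)
    (V : ℕ → ℕ → Type)
    [∀ i j, AddCommGroup (V i j)] [∀ i j, Module F (V i j)]
    [∀ i j, FiniteDimensional F (V i j)]
    (ρ : ∀ i j, V i j →ₗ[F] V i (j + 1))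
    (δ : ∀ i j, V i j →ₗ[F] V (i + 1) j)
    (hρinj : ∀ i j, i ≤ j → j + 1 ≤ N → Function.Injective (ρ i j))
    (hδinj : ∀ i j, i + 1 ≤ j → j ≤ N → Function.Injective (δ i j))
    (hcomm : ∀ i j, i < j → j + 1 ≤ N →
      (δ i (j + 1)).comp (ρ i j) = (ρ (i + 1) j).comp (δ i j))
    (hfib : ∀ i j, i < j → j + 1 ≤ N →
      LinearMap.range (ρ (i + 1) j) ⊓ LinearMap.range (δ i (j + 1)) =
        LinearMap.range ((δ i (j + 1)).comp (ρ i j))) :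
    ∃ D R Z : ∀ i j : ℕ, Finset (V i j),
      -- (a) each `Z i j` is an `F`-basis of `V i j`
      (∀ i j, i ≤ j → j ≤ N →
        LinearIndependent F (fun x : {v // v ∈ Z i j} => (x : V i j)) ∧
        Submodule.span F (Z i j : Set (V i j)) = ⊤) ∧
      -- (b)
      (∀ i j, i + 1 ≤ j → j ≤ N →
        Disjoint (Finset.image (δ i j) (Z i j)) (D (i + 1) j) ∧
        Z (i + 1) j = Finset.image (δ i j) (Z i j) ∪ D (i + 1) j) ∧
      -- (c)
      (∀ i j, i ≤ j → j + 1 ≤ N →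
        Disjoint (Finset.image (ρ i j) (Z i j)) (R i (j + 1)) ∧
        Z i (j + 1) = Finset.image (ρ i j) (Z i j) ∪ R i (j + 1)) ∧
      -- (d)
      (∀ i j, i < j → j + 1 ≤ N →
        Z (i + 1) (j + 1) =
          Finset.image (δ i (j + 1)) (Finset.image (ρ i j) (Z i j)) ∪
          Finset.image (ρ (i + 1) j) (D (i + 1) j) ∪
          Finset.image (δ i (j + 1)) (R i (j + 1)) ∪
          (D (i + 1) (j + 1) ∩ R (i + 1) (j + 1)) ∧
        Disjoint (Finset.image (δ i (j + 1)) (Finset.image (ρ i j) (Z i j)))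
          (Finset.image (ρ (i + 1) j) (D (i + 1) j)) ∧
        Disjoint (Finset.image (δ i (j + 1)) (Finset.image (ρ i j) (Z i j)))
          (Finset.image (δ i (j + 1)) (R i (j + 1))) ∧
        Disjoint (Finset.image (δ i (j + 1)) (Finset.image (ρ i j) (Z i j)))
          (D (i + 1) (j + 1) ∩ R (i + 1) (j + 1)) ∧
        Disjoint (Finset.image (ρ (i + 1) j) (D (i + 1) j))
          (Finset.image (δ i (j + 1)) (R i (j + 1))) ∧
        Disjoint (Finset.image (ρ (i + 1) j) (D (i + 1) j))
          (D (i + 1) (j + 1) ∩ R (i + 1) (j + 1)) ∧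
        Disjoint (Finset.image (δ i (j + 1)) (R i (j + 1)))
          (D (i + 1) (j + 1) ∩ R (i + 1) (j + 1))) := by
  suffices h : ∀ M, M ≤ N → ∃ D R Z : ∀ i j : ℕ, Finset (V i j),
      (∀ i j, i ≤ j → j ≤ M → FinLI F (Z i j) ∧
        Submodule.span F (Z i j : Set (V i j)) = ⊤) ∧
      (∀ i j, i + 1 ≤ j → j ≤ M →
        Disjoint (Finset.image (δ i j) (Z i j)) (D (i + 1) j) ∧
        Z (i + 1) j = Finset.image (δ i j) (Z i j) ∪ D (i + 1) j) ∧
      (∀ i j, i ≤ j → j + 1 ≤ M →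
        Disjoint (Finset.image (ρ i j) (Z i j)) (R i (j + 1)) ∧
        Z i (j + 1) = Finset.image (ρ i j) (Z i j) ∪ R i (j + 1)) ∧
      (∀ i j, i < j → j + 1 ≤ M →
        Z (i + 1) (j + 1) =
          Finset.image (δ i (j + 1)) (Finset.image (ρ i j) (Z i j)) ∪
          Finset.image (ρ (i + 1) j) (D (i + 1) j) ∪
          Finset.image (δ i (j + 1)) (R i (j + 1)) ∪
          (D (i + 1) (j + 1) ∩ R (i + 1) (j + 1)) ∧
        Disjoint (Finset.image (δ i (j + 1)) (Finset.image (ρ i j) (Z i j)))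
          (Finset.image (ρ (i + 1) j) (D (i + 1) j)) ∧
        Disjoint (Finset.image (δ i (j + 1)) (Finset.image (ρ i j) (Z i j)))
          (Finset.image (δ i (j + 1)) (R i (j + 1))) ∧
        Disjoint (Finset.image (δ i (j + 1)) (Finset.image (ρ i j) (Z i j)))
          (D (i + 1) (j + 1) ∩ R (i + 1) (j + 1)) ∧
        Disjoint (Finset.image (ρ (i + 1) j) (D (i + 1) j))
          (Finset.image (δ i (j + 1)) (R i (j + 1))) ∧
        Disjoint (Finset.image (ρ (i + 1) j) (D (i + 1) j))
          (D (i + 1) (j + 1) ∩ R (i + 1) (j + 1)) ∧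
        Disjoint (Finset.image (δ i (j + 1)) (R i (j + 1)))
          (D (i + 1) (j + 1) ∩ R (i + 1) (j + 1))) by
    obtain ⟨D, R, Z, ha, hb, hc, hd⟩ := h N le_rfl
    exact ⟨D, R, Z, ha, hb, hc, hd⟩
  intro M
  induction M with
  | zero =>
    intro _
    refine ⟨fun _ _ => ∅, fun _ _ => ∅,
      fun i j => (exists_basis_finset F (V i j)).choose, ?_, ?_, ?_, ?_⟩
    · intro i j _ _
      exact (exists_basis_finset F (V i j)).choose_spec
    · intro i j h1 h2; omega
    · intro i j h1 h2; omega
    · intro i j h1 h2; omega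
  | succ M IH =>
    intro hMN
    obtain ⟨D, R, Z, ha, hb, hc, hd⟩ := IH (by omega)
    have inner : ∀ n, n ≤ M + 1 → ∃ Zc Dc Rc : ∀ k : ℕ, Finset (V k (M + 1)),
        (∀ k, k ≤ n → FinLI F (Zc k) ∧
          Submodule.span F (Zc k : Set (V k (M + 1))) = ⊤) ∧
        (∀ k, k + 1 ≤ n →
          Disjoint (Finset.image (δ k (M + 1)) (Zc k)) (Dc (k + 1)) ∧
          Zc (k + 1) = Finset.image (δ k (M + 1)) (Zc k) ∪ Dc (k + 1)) ∧
        (∀ k, k ≤ n → k ≤ M →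
          Disjoint (Finset.image (ρ k M) (Z k M)) (Rc k) ∧
          Zc k = Finset.image (ρ k M) (Z k M) ∪ Rc k) ∧
        (∀ k, k + 1 ≤ n → k < M →
          Zc (k + 1) =
            Finset.image (δ k (M + 1)) (Finset.image (ρ k M) (Z k M)) ∪
            Finset.image (ρ (k + 1) M) (D (k + 1) M) ∪
            Finset.image (δ k (M + 1)) (Rc k) ∪
            (Dc (k + 1) ∩ Rc (k + 1)) ∧
          Disjoint (Finset.image (δ k (M + 1)) (Finset.image (ρ k M) (Z k M)))
            (Finset.image (ρ (k + 1) M) (D (k + 1) M)) ∧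
          Disjoint (Finset.image (δ k (M + 1)) (Finset.image (ρ k M) (Z k M)))
            (Finset.image (δ k (M + 1)) (Rc k)) ∧
          Disjoint (Finset.image (δ k (M + 1)) (Finset.image (ρ k M) (Z k M)))
            (Dc (k + 1) ∩ Rc (k + 1)) ∧
          Disjoint (Finset.image (ρ (k + 1) M) (D (k + 1) M))
            (Finset.image (δ k (M + 1)) (Rc k)) ∧
          Disjoint (Finset.image (ρ (k + 1) M) (D (k + 1) M))
            (Dc (k + 1) ∩ Rc (k + 1)) ∧
          Disjoint (Finset.image (δ k (M + 1)) (Rc k))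
            (Dc (k + 1) ∩ Rc (k + 1))) := by
      intro n
      induction n with
      | zero =>
        intro _
        have hZ0 := ha 0 M (Nat.zero_le M) le_rfl
        have hli0 : FinLI F ((Z 0 M).image (ρ 0 M)) :=
          li_image _ (hρinj 0 M (Nat.zero_le M) hMN) hZ0.1
        obtain ⟨T, hdT, hliZ, hspZ⟩ := exists_extend_finset _ hli0
        refine ⟨Function.update (fun k => (∅ : Finset (V k (M + 1)))) 0
            ((Z 0 M).image (ρ 0 M) ∪ T),
          fun _ => ∅,
          Function.update (fun k => (∅ : Finset (V k (M + 1)))) 0 T, ?_, ?_, ?_, ?_⟩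
        · intro k hk
          obtain rfl : k = 0 := by omega
          simp only [Function.update_self]
          exact ⟨hliZ, hspZ⟩
        · intro k hk; omega
        · intro k hk _
          obtain rfl : k = 0 := by omega
          simp only [Function.update_self]
          exact ⟨hdT, by simp⟩
        · intro k hk; omega
      | succ n IHn =>
        intro hn1
        obtain ⟨Zc, Dc, Rc, hA, hB, hC, hD⟩ := IHn (by omega)
        have hZcn := hA n le_rfl
        rcases eq_or_ne n M with heq | hnM
        · -- diagonal case `n = M`
          subst heq
          have hli : FinLI F ((Zc n).image (δ n (n + 1))) :=
            li_image _ (hδinj n (n + 1) le_rfl hMN) hZcn.1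
          obtain ⟨T, hdT, hliZ, hspZ⟩ := exists_extend_finset _ hli
          refine ⟨Function.update Zc (n + 1) ((Zc n).image (δ n (n + 1)) ∪ T),
            Function.update Dc (n + 1) T, Function.update Rc (n + 1) ∅, ?_, ?_, ?_, ?_⟩
          · intro k hk
            rcases eq_or_ne k (n + 1) with rfl | hk'
            · simp only [Function.update_self]
              exact ⟨hliZ, hspZ⟩
            · simp only [Function.update_of_ne hk']
              exact hA k (by omega)
          · intro k hk
            rcases eq_or_ne (k + 1) (n + 1) with hk' | hk'
            · obtain rfl : k = n := by omega
              simp only [Function.update_self,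
                Function.update_of_ne (show k ≠ k + 1 by omega)]
              exact ⟨hdT, by simp⟩
            · simp only [Function.update_of_ne hk',
                Function.update_of_ne (show k ≠ n + 1 by omega)]
              exact hB k (by omega)
          · intro k hk hkM
            simp only [Function.update_of_ne (show k ≠ n + 1 by omega)]
            exact hC k (by omega) hkM
          · intro k hk hkM
            have hk2 : k + 1 ≤ n := by omega
            simp only [Function.update_of_ne (show k + 1 ≠ n + 1 by omega),
              Function.update_of_ne (show k ≠ n + 1 by omega)]
            exact hD k (by omega) hkM
        · -- interior case `n < M`
          have hnM' : n < M := by omega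
          have hCn := hC n le_rfl (by omega)
          have hbn := hb n M (by omega) le_rfl
          have hZnM := ha n M (by omega) le_rfl
          have hZn1M := ha (n + 1) M (by omega) le_rfl
          have hd1 : Function.Injective (δ n (M + 1)) := hδinj n (M + 1) (by omega) (by omega)
          have hr1 : Function.Injective (ρ (n + 1) M) := hρinj (n + 1) M (by omega) (by omega)
          have hcm := hcomm n M hnM' hMN
          have hfb := hfib n M hnM' hMN
          have hB0eq : (Zc n).image (δ n (M + 1)) =
              ((Z n M).image (ρ n M)).image (δ n (M + 1)) ∪ (Rc n).image (δ n (M + 1)) := by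
            rw [hCn.2, Finset.image_union]
          have hliB0 : FinLI F ((Zc n).image (δ n (M + 1))) := li_image _ hd1 hZcn.1
          have hDsub : D (n + 1) M ⊆ Z (n + 1) M := by
            rw [hbn.2]; exact Finset.subset_union_right
          have hliA2 : FinLI F ((D (n + 1) M).image (ρ (n + 1) M)) :=
            li_image _ hr1 (li_subset hDsub hZn1M.1)
          have hspan_disj : Disjoint
              (Submodule.span F (((Zc n).image (δ n (M + 1)) : Finset (V (n + 1) (M + 1))) : Set (V (n + 1) (M + 1))))
              (Submodule.span F (((D (n + 1) M).image (ρ (n + 1) M) : Finset (V (n + 1) (M + 1))) : Set (V (n + 1) (M + 1)))) := by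
            rw [Submodule.disjoint_def]
            intro x hxB hxA
            have hspB0 : Submodule.span F (((Zc n).image (δ n (M + 1)) : Finset (V (n + 1) (M + 1))) : Set (V (n + 1) (M + 1)))
                = LinearMap.range (δ n (M + 1)) := by
              rw [Finset.coe_image, Submodule.span_image, hZcn.2, Submodule.map_top]
            rw [hspB0] at hxB
            rw [Finset.coe_image, Submodule.span_image] at hxA
            obtain ⟨u, hu, hux⟩ := Submodule.mem_map.1 hxA
            have hxfib : x ∈ LinearMap.range ((δ n (M + 1)).comp (ρ n M)) := by
              rw [← hfb]
              exact Submodule.mem_inf.2 ⟨⟨u, hux⟩, hxB⟩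
            rw [hcm] at hxfib
            obtain ⟨w, hw⟩ := hxfib
            have huw : u = δ n M w := by
              apply hr1
              rw [hux, ← hw]
              rfl
            have hrd : LinearMap.range (δ n M)
                = Submodule.span F (((Z n M).image (δ n M) : Finset (V (n + 1) M)) : Set (V (n + 1) M)) := by
              rw [Finset.coe_image, Submodule.span_image, hZnM.2, Submodule.map_top]
            have hsd : Disjoint
                (Submodule.span F ((D (n + 1) M : Finset (V (n + 1) M)) : Set (V (n + 1) M)))
                (Submodule.span F (((Z n M).image (δ n M) : Finset (V (n + 1) M)) : Set (V (n + 1) M))) :=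
              disjoint_span_of_disjoint hZn1M.1 hDsub
                (by rw [hbn.2]; exact Finset.subset_union_left) hbn.1.symm
            have hu0 : u = 0 := Submodule.disjoint_def.1 hsd u hu
              (by rw [← hrd]; exact ⟨w, huw.symm⟩)
            rw [← hux, hu0, map_zero]
          have hliS : FinLI F ((Zc n).image (δ n (M + 1)) ∪ (D (n + 1) M).image (ρ (n + 1) M)) :=
            li_union hliB0 hliA2 hspan_disj
          obtain ⟨T, hdT, hliZ, hspZ⟩ := exists_extend_finset _ hliS
          have hdB0A2 : Disjoint ((Zc n).image (δ n (M + 1))) ((D (n + 1) M).image (ρ (n + 1) M)) :=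
            finset_disjoint_of_span_disjoint hliB0 hspan_disj
          obtain ⟨hdB0T, hdA2T⟩ := Finset.disjoint_union_left.1 hdT
          have hdA1A3 : Disjoint (((Z n M).image (ρ n M)).image (δ n (M + 1)))
              ((Rc n).image (δ n (M + 1))) := (Finset.disjoint_image hd1).2 hCn.1
          have hA1B0 : ((Z n M).image (ρ n M)).image (δ n (M + 1)) ⊆ (Zc n).image (δ n (M + 1)) := by
            rw [hB0eq]; exact Finset.subset_union_left
          have hA3B0 : (Rc n).image (δ n (M + 1)) ⊆ (Zc n).image (δ n (M + 1)) := by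
            rw [hB0eq]; exact Finset.subset_union_right
          have hdA1A2 := Finset.disjoint_of_subset_left hA1B0 hdB0A2
          have hdA3A2 := Finset.disjoint_of_subset_left hA3B0 hdB0A2
          have hdA1T := Finset.disjoint_of_subset_left hA1B0 hdB0T
          have hdA3T := Finset.disjoint_of_subset_left hA3B0 hdB0T
          have hfun : (⇑(ρ (n + 1) M) ∘ ⇑(δ n M)) = (⇑(δ n (M + 1)) ∘ ⇑(ρ n M)) := by
            rw [← LinearMap.coe_comp, ← LinearMap.coe_comp, hcm]
          have himg : (Z (n + 1) M).image (ρ (n + 1) M) =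
              ((Z n M).image (ρ n M)).image (δ n (M + 1)) ∪ (D (n + 1) M).image (ρ (n + 1) M) := by
            rw [hbn.2, Finset.image_union]
            congr 1
            rw [Finset.image_image, Finset.image_image, hfun]
          have hDR : ((D (n + 1) M).image (ρ (n + 1) M) ∪ T) ∩ ((Rc n).image (δ n (M + 1)) ∪ T) = T := by
            ext x
            simp only [Finset.mem_inter, Finset.mem_union]
            constructor
            · rintro ⟨h2 | h2, h3 | h3⟩
              · exact ((Finset.disjoint_left.1 hdA3A2 h3) h2).elim
              · exact h3
              · exact h2
              · exact h2
            · intro h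
              exact ⟨Or.inr h, Or.inr h⟩
          refine ⟨Function.update Zc (n + 1)
              (((Zc n).image (δ n (M + 1)) ∪ (D (n + 1) M).image (ρ (n + 1) M)) ∪ T),
            Function.update Dc (n + 1) ((D (n + 1) M).image (ρ (n + 1) M) ∪ T),
            Function.update Rc (n + 1) ((Rc n).image (δ n (M + 1)) ∪ T), ?_, ?_, ?_, ?_⟩
          · intro k hk
            rcases eq_or_ne k (n + 1) with rfl | hk'
            · simp only [Function.update_self]
              exact ⟨hliZ, hspZ⟩
            · simp only [Function.update_of_ne hk']
              exact hA k (by omega)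
          · intro k hk
            rcases eq_or_ne (k + 1) (n + 1) with hk' | hk'
            · obtain rfl : k = n := by omega
              simp only [Function.update_self,
                Function.update_of_ne (show k ≠ k + 1 by omega)]
              constructor
              · exact Finset.disjoint_union_right.2 ⟨hdB0A2, hdB0T⟩
              · rw [Finset.union_assoc]
            · simp only [Function.update_of_ne hk',
                Function.update_of_ne (show k ≠ n + 1 by omega)]
              exact hB k (by omega)
          · intro k hk hkM
            rcases eq_or_ne k (n + 1) with rfl | hk'
            · simp only [Function.update_self]
              constructor
              · rw [himg]
                exact Finset.disjoint_union_left.2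
                  ⟨Finset.disjoint_union_right.2 ⟨hdA1A3, hdA1T⟩,
                   Finset.disjoint_union_right.2 ⟨hdA3A2.symm, hdA2T⟩⟩
              · rw [himg, hB0eq]
                ext x
                simp only [Finset.mem_union]
                tauto
            · simp only [Function.update_of_ne hk']
              exact hC k (by omega) hkM
          · intro k hk hkM
            rcases eq_or_ne (k + 1) (n + 1) with hk' | hk'
            · obtain rfl : k = n := by omega
              simp only [Function.update_self,
                Function.update_of_ne (show k ≠ k + 1 by omega)]
              rw [hDR]
              refine ⟨?_, hdA1A2, hdA1A3, hdA1T, hdA3A2.symm, hdA2T, hdA3T⟩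
              rw [hB0eq]
              ext x
              simp only [Finset.mem_union]
              tauto
            · simp only [Function.update_of_ne hk',
                Function.update_of_ne (show k ≠ n + 1 by omega)]
              exact hD k (by omega) hkM
    obtain ⟨Zc, Dc, Rc, hA, hB, hC, hD⟩ := inner (M + 1) le_rfl
    refine ⟨fun i => Function.update (D i) (M + 1) (Dc i),
            fun i => Function.update (R i) (M + 1) (Rc i),
            fun i => Function.update (Z i) (M + 1) (Zc i), ?_, ?_, ?_, ?_⟩
    · intro i j h1 h2
      rcases eq_or_ne j (M + 1) with rfl | hj
      · simp only [Function.update_self]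
        exact hA i h1
      · simp only [Function.update_of_ne hj]
        exact ha i j h1 (by omega)
    · intro i j h1 h2
      rcases eq_or_ne j (M + 1) with rfl | hj
      · simp only [Function.update_self]
        exact hB i h1
      · simp only [Function.update_of_ne hj]
        exact hb i j h1 (by omega)
    · intro i j h1 h2
      rcases eq_or_ne (j + 1) (M + 1) with hj | hj
      · obtain rfl : j = M := by omega
        simp only [Function.update_self,
          Function.update_of_ne (show j ≠ j + 1 by omega)]
        exact hC i (by omega) h1
      · simp only [Function.update_of_ne hj,
          Function.update_of_ne (show j ≠ M + 1 by omega)]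
        exact hc i j h1 (by omega)
    · intro i j h1 h2
      rcases eq_or_ne (j + 1) (M + 1) with hj | hj
      · obtain rfl : j = M := by omega
        simp only [Function.update_self,
          Function.update_of_ne (show j ≠ j + 1 by omega)]
        exact hD i (by omega) h1
      · simp only [Function.update_of_ne hj,
          Function.update_of_ne (show j ≠ M + 1 by omega)]
        exact hd i j h1 (by omega)
end

section
/- Let F be a finite field containing F_q, let θ̄ ∈ F have minimal polynomial ℘ ∈ F_q[t] over F_q of degree m, and let d ≥ 1 and D ∈ Mat_d(F) be a matrix such that D − θ̄·I_d is nilpotent. Regard F^d as an F_q-vector space (of dimension d·[F : F_q], where [F : F_q] is the degree of F over F_q, so that m divides [F : F_q]) and let T : F^d → F^d be the F_q-linear endomorphism v ↦ D·v. Then the characteristic polynomial of T over F_q equals ℘^{d·[F : F_q]/m}. -/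
/-!
Statement 16.  `F` is a finite field containing `F_q`, `θ̄ ∈ F` has minimal
polynomial `℘ ∈ F_q[t]` over `F_q` of degree `m`, and `D ∈ Mat_d(F)` is a matrix
with `D − θ̄·I_d` nilpotent.  Regarding `F^d` as an `F_q`-vector space and letting
`T : F^d → F^d` be the `F_q`-linear map `v ↦ D·v`, the characteristic polynomial
of `T` over `F_q` equals `℘^{d·[F : F_q]/m}`.
-/

open Polynomial
-- eigen-vector evaluation lemma
lemma aeval_mulVec {A : Type*} [Field A] {ι : Type*} [Fintype ι] [DecidableEq ι]
    (M : Matrix ι ι A) (μ : A) (v : ι → A) (hv : M.mulVec v = μ • v) (q : A[X]) :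
    (aeval M q).mulVec v = q.eval μ • v := by
  induction q using Polynomial.induction_on' with
  | add p q hp hq =>
      simp [map_add, Matrix.add_mulVec, hp, hq, add_smul]
  | monomial i a =>
      have hpow : ∀ i : ℕ, (M ^ i).mulVec v = μ ^ i • v := by
        intro i
        induction i with
        | zero => simp
        | succ n ih =>
            rw [pow_succ, pow_succ, ← Matrix.mulVec_mulVec, hv,
              Matrix.mulVec_smul, ih, smul_smul, mul_comm]
      rw [aeval_monomial, eval_monomial]
      simp [Matrix.mulVec_smul, Matrix.smul_mulVec, hpow, smul_smul,
        Algebra.algebraMap_eq_smul_one]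

lemma charpoly_eval_eq_det {A : Type*} [CommRing A] {ι : Type*} [Fintype ι] [DecidableEq ι]
    (M : Matrix ι ι A) (μ : A) :
    M.charpoly.eval μ = (Matrix.scalar ι μ - M).det := by
  rw [Matrix.charpoly, eval_det, Matrix.matPolyEquiv_charmatrix]
  simp

lemma root_charpoly_is_root {A : Type*} [Field A] {ι : Type*} [Fintype ι] [DecidableEq ι]
    (M : Matrix ι ι A) (q : A[X]) (hq : IsNilpotent (aeval M q))
    (μ : A) (hμ : M.charpoly.IsRoot μ) : q.IsRoot μ := by
  have hdet : (Matrix.scalar ι μ - M).det = 0 := by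
    rw [← charpoly_eval_eq_det]; exact hμ
  obtain ⟨v, hv0, hv⟩ := (Matrix.exists_mulVec_eq_zero_iff).2 hdet
  have hMv : M.mulVec v = μ • v := by
    simp [Matrix.sub_mulVec, sub_eq_zero] at hv
    exact hv.symm
  obtain ⟨k, hk⟩ := hq
  have := aeval_mulVec M μ v hMv (q ^ k)
  rw [map_pow, hk, eval_pow] at this
  have h0 : (q.eval μ) ^ k • v = 0 := by simpa using this.symm
  by_contra hroot
  have : (q.eval μ) ^ k ≠ 0 := pow_ne_zero _ (by simpa [Polynomial.IsRoot] using hroot)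
  exact hv0 (by simpa [smul_eq_zero, this] using h0)

lemma matrix_charpoly_eq_pow {K : Type*} [Field K] {ι : Type*} [Fintype ι] [DecidableEq ι]
    (M : Matrix ι ι K) (p : K[X]) (hm : p.Monic) (hirr : Irreducible p)
    (hnil : IsNilpotent (aeval M p)) :
    M.charpoly = p ^ (Fintype.card ι / p.natDegree) := by
  set A := AlgebraicClosure K with hA
  let φ : K →+* A := algebraMap K A
  set MA := M.map φ with hMA
  have hnilA : IsNilpotent (aeval MA p) := by
    have h1 : aeval MA p = ((Algebra.ofId K A).mapMatrix (aeval M p) : Matrix ι ι A) := by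
      rw [← Polynomial.aeval_algHom_apply]; rfl
    rw [h1]
    exact hnil.map _
  have hnilA' : IsNilpotent (aeval MA (p.map φ)) := by
    rwa [Polynomial.aeval_map_algebraMap]
  have hchar : MA.charpoly = M.charpoly.map φ := Matrix.charpoly_map M φ
  have hsplits : MA.charpoly.Splits := IsAlgClosed.splits _
  have hmonicA : MA.charpoly.Monic := Matrix.charpoly_monic _
  have hprod : MA.charpoly = (MA.charpoly.roots.map fun μ => X - C μ).prod :=
    hsplits.eq_prod_roots_of_monic hmonicA
  have hdvd1 : MA.charpoly ∣ (p.map φ) ^ Fintype.card ι := by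
    have hcard : Multiset.card MA.charpoly.roots ≤ Fintype.card ι := by
      have := MA.charpoly.card_roots'
      rwa [Matrix.charpoly_natDegree_eq_dim] at this
    calc MA.charpoly = (MA.charpoly.roots.map fun μ => X - C μ).prod := hprod
      _ ∣ (MA.charpoly.roots.map fun _ => p.map φ).prod := by
          apply Multiset.prod_dvd_prod_of_dvd
          intro μ hμ
          exact dvd_iff_isRoot.2
            (root_charpoly_is_root MA (p.map φ) hnilA' μ
              (Polynomial.isRoot_of_mem_roots hμ))
      _ = (p.map φ) ^ Multiset.card MA.charpoly.roots := by
          rw [Multiset.map_const', Multiset.prod_replicate]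
      _ ∣ (p.map φ) ^ Fintype.card ι := pow_dvd_pow _ hcard
  have hdvd : M.charpoly ∣ p ^ Fintype.card ι := by
    rw [← Polynomial.map_dvd_map' φ, Polynomial.map_pow, ← hchar]
    exact hdvd1
  obtain ⟨i, hi, hassoc⟩ := (dvd_prime_pow hirr.prime _).1 hdvd
  have heq : M.charpoly = p ^ i :=
    Polynomial.eq_of_monic_of_associated (Matrix.charpoly_monic _) (hm.pow _) hassoc
  have hdeg : Fintype.card ι = i * p.natDegree := by
    have := congrArg Polynomial.natDegree heq
    rw [Matrix.charpoly_natDegree_eq_dim, Polynomial.natDegree_pow] at this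
    exact this
  rw [heq, hdeg, Nat.mul_div_cancel _ hirr.natDegree_pos]

lemma linearMap_charpoly_eq_pow {K V : Type*} [Field K] [AddCommGroup V] [Module K V]
    [FiniteDimensional K V] (f : V →ₗ[K] V) (p : K[X]) (hm : p.Monic) (hirr : Irreducible p)
    (hnil : IsNilpotent (aeval f p)) :
    f.charpoly = p ^ (Module.finrank K V / p.natDegree) := by
  let b := Module.Free.chooseBasis K V
  set M := LinearMap.toMatrix b b f with hMdef
  have hM : IsNilpotent (aeval M p) := by
    have h1 : aeval M p = (LinearMap.toMatrixAlgEquiv b : Module.End K V →ₐ[K] _) (aeval f p) := by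
      rw [← Polynomial.aeval_algHom_apply]
      rfl
    rw [h1]
    exact hnil.map _
  rw [← LinearMap.charpoly_toMatrix f b, Module.finrank_eq_card_chooseBasisIndex]
  exact matrix_charpoly_eq_pow M p hm hirr hM

def restrictScalarsAlgHom (Fq F V : Type*) [CommSemiring Fq] [Semiring F] [Algebra Fq F]
    [AddCommMonoid V] [Module Fq V] [Module F V] [IsScalarTower Fq F V] :
    (V →ₗ[F] V) →ₐ[Fq] (V →ₗ[Fq] V) where
  toFun f := f.restrictScalars Fq
  map_one' := rfl
  map_mul' _ _ := rfl
  map_zero' := rfl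
  map_add' _ _ := rfl
  commutes' c := by
    ext v
    simp [Module.algebraMap_end_apply, algebraMap_smul]

theorem charpoly_of_nilpotent_shift
    (Fq : Type) [Field Fq] [Fintype Fq]
    (F : Type) [Field F] [Fintype F] [Algebra Fq F] [FiniteDimensional Fq F]
    (θbar : F)
    (d : ℕ) (hd : 1 ≤ d)
    (D : Matrix (Fin d) (Fin d) F)
    (hD : IsNilpotent (D - θbar • (1 : Matrix (Fin d) (Fin d) F))) :
    LinearMap.charpoly
        (LinearMap.restrictScalars Fq (Matrix.mulVecLin D) :
          (Fin d → F) →ₗ[Fq] (Fin d → F)) =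
      (minpoly Fq θbar) ^
        (d * Module.finrank Fq F / (minpoly Fq θbar).natDegree) := by
  have hint : IsIntegral Fq θbar := Algebra.IsIntegral.isIntegral θbar
  set p := minpoly Fq θbar with hp
  have hm : p.Monic := minpoly.monic hint
  have hirr : Irreducible p := minpoly.irreducible hint
  set pF : F[X] := p.map (algebraMap Fq F) with hpF
  -- θbar is a root of pF
  have hroot : pF.IsRoot θbar := by
    rw [Polynomial.IsRoot, hpF, Polynomial.eval_map, ← Polynomial.aeval_def, minpoly.aeval]
  obtain ⟨g, hg⟩ := Polynomial.dvd_iff_isRoot.2 hroot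
  -- aeval D pF is nilpotent
  have haevalD : IsNilpotent (aeval D pF) := by
    rw [hg, map_mul]
    have h1 : aeval D ((X : F[X]) - C θbar) = D - θbar • (1 : Matrix (Fin d) (Fin d) F) := by
      simp [Algebra.algebraMap_eq_smul_one]
    refine Commute.isNilpotent_mul_right ?_ (by rw [h1]; exact hD)
    exact (Commute.all ((X : F[X]) - C θbar) g).map (aeval D)
  -- transfer to the F-linear endomorphism
  set S : (Fin d → F) →ₗ[F] (Fin d → F) := Matrix.mulVecLin D with hS
  have hSnil : IsNilpotent (aeval S pF) := by
    have h1 : aeval S pF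
        = (Matrix.toLinAlgEquiv' : Matrix (Fin d) (Fin d) F ≃ₐ[F] _) (aeval D pF) := by
      rw [← Polynomial.aeval_algHom_apply]
      rfl
    rw [h1]
    exact haevalD.map _
  -- transfer to the Fq-linear endomorphism
  set T : (Fin d → F) →ₗ[Fq] (Fin d → F) := LinearMap.restrictScalars Fq S with hT
  have hTnil : IsNilpotent (aeval T p) := by
    have h1 : aeval T p = restrictScalarsAlgHom Fq F (Fin d → F) (aeval S p) := by
      rw [← Polynomial.aeval_algHom_apply]
      rfl
    have h2 : aeval S p = aeval S pF := (Polynomial.aeval_map_algebraMap F S p).symm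
    rw [h1, h2]
    exact hSnil.map _
  have hrank : Module.finrank Fq (Fin d → F) = d * Module.finrank Fq F := by
    rw [Module.finrank_pi_fintype, Finset.sum_const, Finset.card_univ, Fintype.card_fin,
      smul_eq_mul]
  rw [← hrank]
  exact linearMap_charpoly_eq_pow T p hm hirr hTnil
end
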